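/- arXiv:2305.16483 — 9 statements merged into one kernel-verified Lean document; each statement's English description precedes it below -/
import Mathlib

section
/- Let ν and μ be distributions on S×X×A, β a distribution on X, B ⊆ X, m a positive integer, σ₁ > 0 and C ≥ 0. Assume β(x) ≥ σ₁ for all x ∈ B, and ν(s,a) ≤ C·μ(s,a) for all (s,a) ∈ S×A (marginals). Then for every function f : S×X×A → ℝ, ‖f‖_{2,ν,B} ≤ sqrt((m+1)C/(m σ₁)) · ‖f‖_{2,μ̄_β,B}. -/
open Finset

section Defs

variable {S X A : Type*} [Fintype S] [Fintype X] [Fintype A]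

/-- A distribution on `S × X × A`, written in curried form. -/
def IsDist3 (ν : S → X → A → ℝ) : Prop :=
  (∀ s x a, 0 ≤ ν s x a) ∧ ∑ s, ∑ x, ∑ a, ν s x a = 1

/-- A distribution on `X`. -/
def IsDist1 (β : X → ℝ) : Prop := (∀ x, 0 ≤ β x) ∧ ∑ x, β x = 1

/-- A distribution on `S × X`. -/
def IsDist2 (η : S → X → ℝ) : Prop := (∀ s x, 0 ≤ η s x) ∧ ∑ s, ∑ x, η s x = 1

/-- A Markov transition kernel `P(·|s,a)` on `S`. -/
def IsKernel (P : S → A → S → ℝ) : Prop :=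
  (∀ s a s', 0 ≤ P s a s') ∧ ∀ s a, ∑ s', P s a s' = 1

/-- The `(s,a)`-marginal of a distribution on `S × X × A`. -/
def marginal (ν : S → X → A → ℝ) (s : S) (a : A) : ℝ := ∑ x, ν s x a

/-- The augmented distribution `μ̄_β` after generating `m` virtual samples per real sample. -/
noncomputable def augDist (μ : S → X → A → ℝ) (β : X → ℝ) (m : ℕ) (s : S) (x : X) (a : A) : ℝ :=
  (1 / ((m : ℝ) + 1)) * μ s x a + ((m : ℝ) / ((m : ℝ) + 1)) * marginal μ s a * β x

/-- The weighted `L²(ν)` norm of `f : S × X × A → ℝ`. -/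
noncomputable def norm2 (ν : S → X → A → ℝ) (f : S → X → A → ℝ) : ℝ :=
  Real.sqrt (∑ s, ∑ x, ∑ a, ν s x a * f s x a ^ 2)

/-- The `B`-restricted weighted `L²(ν)` norm (sum only over `x ∈ B`). -/
noncomputable def norm2B (ν : S → X → A → ℝ) (B : Finset X) (f : S → X → A → ℝ) : ℝ :=
  Real.sqrt (∑ s, ∑ x ∈ B, ∑ a, ν s x a * f s x a ^ 2)

/-- The weighted `L²(η)` norm of `h : S × X → ℝ`. -/
noncomputable def norm2SX (η : S → X → ℝ) (h : S → X → ℝ) : ℝ :=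
  Real.sqrt (∑ s, ∑ x, η s x * h s x ^ 2)

/-- `V_f(s,x) := min_{a ∈ A} f(s,x,a)`. -/
noncomputable def Vmin [Nonempty A] (f : S → X → A → ℝ) (s : S) (x : X) : ℝ :=
  Finset.univ.inf' Finset.univ_nonempty (f s x)

/-- The Bellman (optimality) operator `(T f)(s,x,a) = R(s,x,a) + γ Σ_{s'} P(s'|s,a) V_f(s', g(s,x,a,s'))`. -/
noncomputable def bellman [Nonempty A] (P : S → A → S → ℝ) (g : S → X → A → S → X)
    (R : S → X → A → ℝ) (γ : ℝ) (f : S → X → A → ℝ) (s : S) (x : X) (a : A) : ℝ :=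
  R s x a + γ * ∑ s', P s a s' * Vmin f s' (g s x a s')

/-- The pushforward distribution `P(ν)` on `S × X`. -/
noncomputable def pushforward [DecidableEq X] (P : S → A → S → ℝ) (g : S → X → A → S → X)
    (ν : S → X → A → ℝ) (s' : S) (x' : X) : ℝ :=
  ∑ s, ∑ x, ∑ a, ν s x a * P s a s' * (if x' = g s x a s' then 1 else 0)

/-- The product distribution `η × π` on `S × X × A` of a state distribution and a
deterministic policy. -/
def prodPolicy [DecidableEq A] (η : S → X → ℝ) (π : S → X → A) (s : S) (x : X) (a : A) : ℝ :=
  η s x * (if a = π s x then 1 else 0)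

/-- `π` is a selection of `argmin_a min{f(s,x,a), f'(s,x,a)}`. -/
def IsMinSelection (f f' : S → X → A → ℝ) (π : S → X → A) : Prop :=
  ∀ s x a, min (f s x (π s x)) (f' s x (π s x)) ≤ min (f s x a) (f' s x a)

end Defs

/-! On `B` the weight `ν` has density at most `(m+1)C/(mσ₁)` with respect to `μ̄_β`:
`ν(s,x,a) ≤ ν(s,a) ≤ C μ(s,a)`, while the virtual samples alone give
`μ̄_β(s,x,a) ≥ m/(m+1) · μ(s,a) · σ₁`. A restricted weighted `L²` norm is monotone in the
weight, which scales under the square root. -/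

theorem norm2B_le_sqrt_mul_norm2B {S X A : Type*} [Fintype S] [Fintype A]
    {ν ρ : S → X → A → ℝ} {B : Finset X} {c : ℝ} (hc : 0 ≤ c)
    (hνρ : ∀ s, ∀ x ∈ B, ∀ a, ν s x a ≤ c * ρ s x a) (f : S → X → A → ℝ) :
    norm2B ν B f ≤ Real.sqrt c * norm2B ρ B f := by
  rw [norm2B, norm2B, ← Real.sqrt_mul hc]
  refine Real.sqrt_le_sqrt ?_
  simp only [Finset.mul_sum, ← mul_assoc]
  gcongr with s _ x hx a _
  exact hνρ s x hx a

theorem le_marginal {S X A : Type*} [Fintype X] {ν : S → X → A → ℝ}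
    (hν : ∀ s x a, 0 ≤ ν s x a) (s : S) (x : X) (a : A) :
    ν s x a ≤ marginal ν s a :=
  Finset.single_le_sum (fun x _ => hν s x a) (Finset.mem_univ x)

theorem marginal_mul_le_augDist {S X A : Type*} [Fintype X] {μ : S → X → A → ℝ}
    (hμ : ∀ s x a, 0 ≤ μ s x a) (β : X → ℝ) (m : ℕ) (s : S) (x : X) (a : A) :
    (m : ℝ) / (m + 1) * marginal μ s a * β x ≤ augDist μ β m s x a := by
  have : 0 ≤ 1 / ((m : ℝ) + 1) * μ s x a := mul_nonneg (by positivity) (hμ s x a)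
  unfold augDist
  linarith

theorem le_mul_augDist {S X A : Type*} [Fintype X] {ν μ : S → X → A → ℝ} {β : X → ℝ} {m : ℕ}
    {σ1 C : ℝ}
    (hν : ∀ s x a, 0 ≤ ν s x a) (hμ : ∀ s x a, 0 ≤ μ s x a) (hm : 0 < m) (hσ1 : 0 < σ1)
    (hC : 0 ≤ C) (hcov : ∀ s a, marginal ν s a ≤ C * marginal μ s a)
    (s : S) (x : X) (a : A) (hβx : σ1 ≤ β x) :
    ν s x a ≤ ((m : ℝ) + 1) * C / ((m : ℝ) * σ1) * augDist μ β m s x a := by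
  have hm' : (0 : ℝ) < m := Nat.cast_pos.mpr hm
  have hμsa : 0 ≤ marginal μ s a := Finset.sum_nonneg fun x _ => hμ s x a
  calc ν s x a ≤ C * marginal μ s a := (le_marginal hν s x a).trans (hcov s a)
    _ = ((m : ℝ) + 1) * C / ((m : ℝ) * σ1) * ((m : ℝ) / (m + 1) * marginal μ s a * σ1) := by
        field_simp
    _ ≤ ((m : ℝ) + 1) * C / ((m : ℝ) * σ1) * augDist μ β m s x a := by
        gcongr
        exact (mul_le_mul_of_nonneg_left hβx (by positivity)).trans
          (marginal_mul_le_augDist hμ β m s x a)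

theorem statement1_general {S X A : Type*} [Fintype S] [Fintype X] [Fintype A]
    (ν μ : S → X → A → ℝ) (β : X → ℝ) (B : Finset X) (m : ℕ) (σ1 C : ℝ)
    (hν : IsDist3 ν) (hμ : IsDist3 μ)
    (hm : 0 < m) (hσ1 : 0 < σ1) (hC : 0 ≤ C)
    (hβB : ∀ x ∈ B, σ1 ≤ β x)
    (hcov : ∀ s a, marginal ν s a ≤ C * marginal μ s a) :
    ∀ f : S → X → A → ℝ,
      norm2B ν B f
        ≤ Real.sqrt (((m : ℝ) + 1) * C / ((m : ℝ) * σ1)) * norm2B (augDist μ β m) B f :=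
  norm2B_le_sqrt_mul_norm2B (by positivity) fun s x hx a =>
    le_mul_augDist hν.1 hμ.1 hm hσ1 hC hcov s x a (hβB x hx)

/-- Lemma S.2: norm change of measure,
`‖f‖_{2,ν,B} ≤ sqrt((m+1)C/(m σ₁)) ‖f‖_{2,μ̄_β,B}`. -/
theorem statement1 {S X A : Type*} [Fintype S] [Fintype X] [Fintype A]
    [Nonempty S] [Nonempty X] [Nonempty A]
    (ν μ : S → X → A → ℝ) (β : X → ℝ) (B : Finset X) (m : ℕ) (σ1 C : ℝ)
    (hν : IsDist3 ν) (hμ : IsDist3 μ) (hβ : IsDist1 β)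
    (hm : 0 < m) (hσ1 : 0 < σ1) (hC : 0 ≤ C)
    (hβB : ∀ x ∈ B, σ1 ≤ β x)
    (hcov : ∀ s a, marginal ν s a ≤ C * marginal μ s a) :
    ∀ f : S → X → A → ℝ,
      norm2B ν B f
        ≤ Real.sqrt (((m : ℝ) + 1) * C / ((m : ℝ) * σ1)) * norm2B (augDist μ β m) B f :=
  statement1_general ν μ β B m σ1 C hν hμ hm hσ1 hC hβB hcov
end

section
/- Let A be a finite nonempty set and u, u' : A → ℝ. Let a* ∈ A be any element minimizing a ↦ min{u(a), u'(a)} over A. Then (min_{a∈A} u(a) − min_{a∈A} u'(a))² ≤ (u(a*) − u'(a*))². -/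
open Finset

/-- for a minimizer `a*` of `a ↦ min{u(a), u'(a)}`,
`(min_a u(a) − min_a u'(a))² ≤ (u(a*) − u'(a*))²`. -/
theorem statement2 {A : Type*} [Fintype A] [Nonempty A] (u u' : A → ℝ) (astar : A)
    (hstar : ∀ a, min (u astar) (u' astar) ≤ min (u a) (u' a)) :
    (Finset.univ.inf' Finset.univ_nonempty u - Finset.univ.inf' Finset.univ_nonempty u') ^ 2
      ≤ (u astar - u' astar) ^ 2 := by
  obtain ⟨b, -, hb⟩ := Finset.exists_mem_eq_inf' Finset.univ_nonempty u
  obtain ⟨b', -, hb'⟩ := Finset.exists_mem_eq_inf' Finset.univ_nonempty u'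
  have hm1 : Finset.univ.inf' Finset.univ_nonempty u ≤ u astar :=
    Finset.inf'_le _ (Finset.mem_univ _)
  have hm2 : Finset.univ.inf' Finset.univ_nonempty u' ≤ u' astar :=
    Finset.inf'_le _ (Finset.mem_univ _)
  have h1 : min (u astar) (u' astar) ≤ Finset.univ.inf' Finset.univ_nonempty u :=
    hb ▸ (hstar b).trans (min_le_left _ _)
  have h2 : min (u astar) (u' astar) ≤ Finset.univ.inf' Finset.univ_nonempty u' :=
    hb' ▸ (hstar b').trans (min_le_right _ _)
  rcases le_total (u astar) (u' astar) with h | h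
  · rw [min_eq_left h] at h1 h2
    nlinarith
  · rw [min_eq_right h] at h1 h2
    nlinarith
end

section
/- For every distribution ν on S×X×A and all functions f, f' : S×X×A → ℝ, ‖V_f − V_{f'}‖_{2,P(ν)} ≤ ‖f − f'‖_{2, P(ν)×π_{f,f'}}. -/
open Finset

private lemma key_half {A : Type*} [Fintype A] [Nonempty A] (f f' : A → ℝ) (a0 : A)
    (h : ∀ a, min (f a0) (f' a0) ≤ min (f a) (f' a))
    (hle : Finset.univ.inf' Finset.univ_nonempty f' ≤ Finset.univ.inf' Finset.univ_nonempty f) :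
    Finset.univ.inf' Finset.univ_nonempty f - Finset.univ.inf' Finset.univ_nonempty f'
      ≤ |f a0 - f' a0| := by
  obtain ⟨b, -, hb⟩ := Finset.exists_mem_eq_inf' (Finset.univ_nonempty) f'
  have h1 : min (f a0) (f' a0) ≤ Finset.univ.inf' Finset.univ_nonempty f' := by
    calc min (f a0) (f' a0) ≤ min (f b) (f' b) := h b
    _ ≤ f' b := min_le_right _ _
    _ = _ := hb.symm
  have h2 : Finset.univ.inf' Finset.univ_nonempty f ≤ f a0 := Finset.inf'_le _ (Finset.mem_univ _)
  rcases le_total (f' a0) (f a0) with hc | hc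
  · rw [min_eq_right hc] at h1
    calc _ ≤ f a0 - f' a0 := by linarith
    _ ≤ |f a0 - f' a0| := le_abs_self _
  · rw [min_eq_left hc] at h1
    have : Finset.univ.inf' Finset.univ_nonempty f - Finset.univ.inf' Finset.univ_nonempty f' ≤ 0 := by
      linarith
    exact this.trans (abs_nonneg _)

private lemma key_abs {A : Type*} [Fintype A] [Nonempty A] (f f' : A → ℝ) (a0 : A)
    (h : ∀ a, min (f a0) (f' a0) ≤ min (f a) (f' a)) :
    |Finset.univ.inf' Finset.univ_nonempty f - Finset.univ.inf' Finset.univ_nonempty f'|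
      ≤ |f a0 - f' a0| := by
  rcases le_total (Finset.univ.inf' Finset.univ_nonempty f') (Finset.univ.inf' Finset.univ_nonempty f) with hle | hle
  · rw [abs_of_nonneg (by linarith)]
    exact key_half f f' a0 h hle
  · rw [abs_of_nonpos (by linarith), neg_sub]
    have := key_half f' f a0 (fun a => by rw [min_comm (f' a0), min_comm (f' a)]; exact h a) hle
    rwa [abs_sub_comm] at this

/-- Lemma S.3: `‖V_f − V_{f'}‖_{2,P(ν)} ≤ ‖f − f'‖_{2,P(ν)×π_{f,f'}}`. -/
theorem statement3 {S X A : Type*} [Fintype S] [Fintype X] [Fintype A]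
    [Nonempty S] [Nonempty X] [Nonempty A] [DecidableEq X] [DecidableEq A]
    (P : S → A → S → ℝ) (g : S → X → A → S → X) (hP : IsKernel P)
    (ν : S → X → A → ℝ) (hν : IsDist3 ν)
    (f f' : S → X → A → ℝ) (π : S → X → A) (hπ : IsMinSelection f f' π) :
    norm2SX (pushforward P g ν) (fun s x => Vmin f s x - Vmin f' s x)
      ≤ norm2 (prodPolicy (pushforward P g ν) π) (fun s x a => f s x a - f' s x a) := by
  have hηnn : ∀ s x, 0 ≤ pushforward P g ν s x := by
    intro s x
    apply Finset.sum_nonneg; intro s' _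
    apply Finset.sum_nonneg; intro x' _
    apply Finset.sum_nonneg; intro a _
    have := hν.1 s' x' a
    have := hP.1 s' a s
    positivity
  unfold norm2SX norm2
  apply Real.sqrt_le_sqrt
  apply Finset.sum_le_sum; intro s _
  apply Finset.sum_le_sum; intro x _
  have hsum : ∑ a, prodPolicy (pushforward P g ν) π s x a * (f s x a - f' s x a) ^ 2
      = pushforward P g ν s x * (f s x (π s x) - f' s x (π s x)) ^ 2 := by
    unfold prodPolicy
    rw [Finset.sum_eq_single (π s x)]
    · simp
    · intro b _ hb; simp [hb]
    · simp
  rw [hsum]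
  have hkey := key_abs (f s x) (f' s x) (π s x) (hπ s x)
  have hsq : (Vmin f s x - Vmin f' s x) ^ 2 ≤ (f s x (π s x) - f' s x (π s x)) ^ 2 := by
    rw [← sq_abs, ← sq_abs (f s x (π s x) - _)]
    exact pow_le_pow_left₀ (abs_nonneg _) hkey 2
  exact mul_le_mul_of_nonneg_left hsq (hηnn s x)
end

section
/- Let Q* : S×X×A → ℝ satisfy the Bellman equation Q* = T Q*, and set V*(s,x) := min_{a∈A} Q*(s,x,a). Then for every distribution ν on S×X×A and every f' : S×X×A → ℝ, ‖T f' − Q*‖_{2,ν} ≤ γ · ‖V_{f'} − V*‖_{2,P(ν)}. -/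
open Finset

/-- `‖T f' − Q*‖_{2,ν} ≤ γ ‖V_{f'} − V*‖_{2,P(ν)}` for the fixed point `Q* = T Q*`. -/
theorem statement4 {S X A : Type*} [Fintype S] [Fintype X] [Fintype A]
    [Nonempty S] [Nonempty X] [Nonempty A] [DecidableEq X]
    (P : S → A → S → ℝ) (g : S → X → A → S → X) (R : S → X → A → ℝ) (γ : ℝ)
    (hP : IsKernel P) (hγ0 : 0 ≤ γ) (hγ1 : γ < 1)
    (Q : S → X → A → ℝ) (hQ : ∀ s x a, Q s x a = bellman P g R γ Q s x a)
    (ν : S → X → A → ℝ) (hν : IsDist3 ν) (f' : S → X → A → ℝ) :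
    norm2 ν (fun s x a => bellman P g R γ f' s x a - Q s x a)
      ≤ γ * norm2SX (pushforward P g ν) (fun s x => Vmin f' s x - Vmin Q s x) := by
  set Δ : S → X → ℝ := fun s x => Vmin f' s x - Vmin Q s x with hΔ
  -- key pointwise identity
  have hdiff : ∀ s x a, bellman P g R γ f' s x a - Q s x a
      = γ * ∑ s', P s a s' * Δ s' (g s x a s') := by
    intro s x a
    rw [hQ s x a]
    simp only [bellman, hΔ, mul_sub, Finset.sum_sub_distrib, Finset.mul_sum]
    ring
  -- pointwise Cauchy-Schwarz
  have hCS : ∀ s x a, (∑ s', P s a s' * Δ s' (g s x a s')) ^ 2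
      ≤ ∑ s', P s a s' * Δ s' (g s x a s') ^ 2 := by
    intro s x a
    have := Finset.sum_sq_le_sum_mul_sum_of_sq_eq_mul Finset.univ
      (r := fun s' => P s a s' * Δ s' (g s x a s'))
      (f := fun s' => P s a s')
      (g := fun s' => P s a s' * Δ s' (g s x a s') ^ 2)
      (fun s' _ => hP.1 s a s')
      (fun s' _ => mul_nonneg (hP.1 s a s') (sq_nonneg _))
      (fun s' _ => by ring)
    rwa [hP.2 s a, one_mul] at this
  -- sum identity for the pushforward
  have hpush : ∑ s', ∑ x', pushforward P g ν s' x' * Δ s' x' ^ 2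
      = ∑ s, ∑ x, ∑ a, ν s x a * ∑ s', P s a s' * Δ s' (g s x a s') ^ 2 := by
    simp only [pushforward, Finset.sum_mul]
    conv_lhs =>
      enter [2, s']
      rw [Finset.sum_comm]
      enter [2, s]
      rw [Finset.sum_comm]
      enter [2, x]
      rw [Finset.sum_comm]
    rw [Finset.sum_comm]
    apply Finset.sum_congr rfl; intro s _
    conv_lhs =>
      rw [Finset.sum_comm]
      enter [2, x]
      rw [Finset.sum_comm]
    apply Finset.sum_congr rfl; intro x _
    apply Finset.sum_congr rfl; intro a _
    rw [Finset.mul_sum]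
    apply Finset.sum_congr rfl; intro s' _
    rw [Finset.sum_eq_single (g s x a s')]
    · simp; ring
    · intro x' _ hx'; simp [hx']
    · simp
  have hγsq : (0:ℝ) ≤ γ ^ 2 := sq_nonneg γ
  have key : ∑ s, ∑ x, ∑ a, ν s x a * (bellman P g R γ f' s x a - Q s x a) ^ 2
      ≤ γ ^ 2 * ∑ s', ∑ x', pushforward P g ν s' x' * Δ s' x' ^ 2 := by
    rw [hpush, Finset.mul_sum]
    apply Finset.sum_le_sum; intro s _
    rw [Finset.mul_sum]
    apply Finset.sum_le_sum; intro x _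
    rw [Finset.mul_sum]
    apply Finset.sum_le_sum; intro a _
    rw [hdiff s x a, mul_pow]
    rw [show γ ^ 2 * (ν s x a * ∑ s', P s a s' * Δ s' (g s x a s') ^ 2)
      = ν s x a * (γ ^ 2 * ∑ s', P s a s' * Δ s' (g s x a s') ^ 2) by ring]
    exact mul_le_mul_of_nonneg_left
      (mul_le_mul_of_nonneg_left (hCS s x a) hγsq) (hν.1 s x a)
  unfold norm2 norm2SX
  rw [show γ * Real.sqrt (∑ s, ∑ x, pushforward P g ν s x * Δ s x ^ 2)
      = Real.sqrt (γ ^ 2 * ∑ s, ∑ x, pushforward P g ν s x * Δ s x ^ 2) by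
    rw [Real.sqrt_mul hγsq, Real.sqrt_sq hγ0]]
  exact Real.sqrt_le_sqrt key
end

section
/- Let ν and μ be distributions on S×X×A, β a distribution on X, B ⊆ X, m a positive integer, σ₁ > 0 and C ≥ 0. Assume β(x) ≥ σ₁ for all x ∈ B, ν(s,a) ≤ C·μ(s,a) for all (s,a) ∈ S×A (marginals), and let Q* : S×X×A → ℝ satisfy Q* = T Q*. Then for all f, f' : S×X×A → ℝ, ‖f − Q*‖_{2,ν,B} ≤ sqrt((m+1)C/(m σ₁)) · ‖f − T f'‖_{2,μ̄_β,B} + γ · ‖f' − Q*‖_{2, P(ν)×π_{f',Q*}}. -/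
open Finset

private lemma cs_sum {ι : Type*} (s : Finset ι) (a b : ι → ℝ) :
    ∑ i ∈ s, a i * b i ≤ Real.sqrt (∑ i ∈ s, a i ^ 2) * Real.sqrt (∑ i ∈ s, b i ^ 2) := by
  have h := Finset.sum_mul_sq_le_sq_mul_sq s a b
  calc ∑ i ∈ s, a i * b i ≤ |∑ i ∈ s, a i * b i| := le_abs_self _
    _ = Real.sqrt ((∑ i ∈ s, a i * b i) ^ 2) := (Real.sqrt_sq_eq_abs _).symm
    _ ≤ Real.sqrt ((∑ i ∈ s, a i ^ 2) * ∑ i ∈ s, b i ^ 2) := Real.sqrt_le_sqrt h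
    _ = _ := Real.sqrt_mul (Finset.sum_nonneg fun i _ => sq_nonneg _) _

private lemma minkowski {ι : Type*} (s : Finset ι) (a b : ι → ℝ) :
    Real.sqrt (∑ i ∈ s, (a i + b i) ^ 2)
      ≤ Real.sqrt (∑ i ∈ s, a i ^ 2) + Real.sqrt (∑ i ∈ s, b i ^ 2) := by
  have hA0 : 0 ≤ ∑ i ∈ s, a i ^ 2 := Finset.sum_nonneg fun i _ => sq_nonneg _
  have hB0 : 0 ≤ ∑ i ∈ s, b i ^ 2 := Finset.sum_nonneg fun i _ => sq_nonneg _
  have hcs := cs_sum s a b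
  have expand : ∑ i ∈ s, (a i + b i) ^ 2
      = (∑ i ∈ s, a i ^ 2) + 2 * (∑ i ∈ s, a i * b i) + ∑ i ∈ s, b i ^ 2 := by
    simp only [Finset.mul_sum, ← Finset.sum_add_distrib]
    exact Finset.sum_congr rfl fun i _ => by ring
  have key : ∑ i ∈ s, (a i + b i) ^ 2
      ≤ (Real.sqrt (∑ i ∈ s, a i ^ 2) + Real.sqrt (∑ i ∈ s, b i ^ 2)) ^ 2 := by
    rw [expand, add_sq, Real.sq_sqrt hA0, Real.sq_sqrt hB0]
    nlinarith [hcs]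
  calc Real.sqrt (∑ i ∈ s, (a i + b i) ^ 2)
      ≤ Real.sqrt ((Real.sqrt (∑ i ∈ s, a i ^ 2) + Real.sqrt (∑ i ∈ s, b i ^ 2)) ^ 2) :=
        Real.sqrt_le_sqrt key
    _ = _ := Real.sqrt_sq (by positivity)

private lemma wminkowski {ι : Type*} (s : Finset ι) (w u v : ι → ℝ) (hw : ∀ i ∈ s, 0 ≤ w i) :
    Real.sqrt (∑ i ∈ s, w i * (u i + v i) ^ 2)
      ≤ Real.sqrt (∑ i ∈ s, w i * u i ^ 2) + Real.sqrt (∑ i ∈ s, w i * v i ^ 2) := by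
  have h1 : ∑ i ∈ s, w i * (u i + v i) ^ 2
      = ∑ i ∈ s, (Real.sqrt (w i) * u i + Real.sqrt (w i) * v i) ^ 2 :=
    Finset.sum_congr rfl fun i hi => by
      rw [show (Real.sqrt (w i) * u i + Real.sqrt (w i) * v i) ^ 2
          = (Real.sqrt (w i)) ^ 2 * (u i + v i) ^ 2 from by ring, Real.sq_sqrt (hw i hi)]
  have h2 : ∑ i ∈ s, w i * u i ^ 2 = ∑ i ∈ s, (Real.sqrt (w i) * u i) ^ 2 :=
    Finset.sum_congr rfl fun i hi => by rw [mul_pow, Real.sq_sqrt (hw i hi)]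
  have h3 : ∑ i ∈ s, w i * v i ^ 2 = ∑ i ∈ s, (Real.sqrt (w i) * v i) ^ 2 :=
    Finset.sum_congr rfl fun i hi => by rw [mul_pow, Real.sq_sqrt (hw i hi)]
  rw [h1, h2, h3]
  exact minkowski s _ _

private lemma jensen {ι : Type*} (s : Finset ι) (w d : ι → ℝ) (hw : ∀ i ∈ s, 0 ≤ w i)
    (hw1 : ∑ i ∈ s, w i = 1) :
    (∑ i ∈ s, w i * d i) ^ 2 ≤ ∑ i ∈ s, w i * d i ^ 2 := by
  have h := Finset.sum_mul_sq_le_sq_mul_sq s (fun i => Real.sqrt (w i))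
    (fun i => Real.sqrt (w i) * d i)
  have e1 : ∑ i ∈ s, Real.sqrt (w i) * (Real.sqrt (w i) * d i) = ∑ i ∈ s, w i * d i :=
    Finset.sum_congr rfl fun i hi => by rw [← mul_assoc, Real.mul_self_sqrt (hw i hi)]
  have e2 : ∑ i ∈ s, (Real.sqrt (w i)) ^ 2 = ∑ i ∈ s, w i :=
    Finset.sum_congr rfl fun i hi => Real.sq_sqrt (hw i hi)
  have e3 : ∑ i ∈ s, (Real.sqrt (w i) * d i) ^ 2 = ∑ i ∈ s, w i * d i ^ 2 :=
    Finset.sum_congr rfl fun i hi => by rw [mul_pow, Real.sq_sqrt (hw i hi)]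
  rw [e1, e2, e3, hw1, one_mul] at h
  exact h


/-- Lemma S.4: `‖f − Q*‖_{2,ν,B} ≤ sqrt((m+1)C/(m σ₁)) ‖f − T f'‖_{2,μ̄_β,B}
  + γ ‖f' − Q*‖_{2,P(ν)×π_{f',Q*}}`. -/
theorem statement5 {S X A : Type*} [Fintype S] [Fintype X] [Fintype A]
    [Nonempty S] [Nonempty X] [Nonempty A] [DecidableEq X] [DecidableEq A]
    (P : S → A → S → ℝ) (g : S → X → A → S → X) (R : S → X → A → ℝ) (γ : ℝ)
    (hP : IsKernel P) (hγ0 : 0 ≤ γ) (hγ1 : γ < 1)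
    (ν μ : S → X → A → ℝ) (β : X → ℝ) (B : Finset X) (m : ℕ) (σ1 C : ℝ)
    (hν : IsDist3 ν) (hμ : IsDist3 μ) (hβ : IsDist1 β)
    (hm : 0 < m) (hσ1 : 0 < σ1) (hC : 0 ≤ C)
    (hβB : ∀ x ∈ B, σ1 ≤ β x)
    (hcov : ∀ s a, marginal ν s a ≤ C * marginal μ s a)
    (Q : S → X → A → ℝ) (hQ : ∀ s x a, Q s x a = bellman P g R γ Q s x a) :
    ∀ (f f' : S → X → A → ℝ) (π : S → X → A), IsMinSelection f' Q π →
      norm2B ν B (fun s x a => f s x a - Q s x a)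
        ≤ Real.sqrt (((m : ℝ) + 1) * C / ((m : ℝ) * σ1))
            * norm2B (augDist μ β m) B (fun s x a => f s x a - bellman P g R γ f' s x a)
          + γ * norm2 (prodPolicy (pushforward P g ν) π)
              (fun s x a => f' s x a - Q s x a) := by
  intro f f' π hπ
  set Tf := bellman P g R γ f' with hTf
  set K := ((m : ℝ) + 1) * C / ((m : ℝ) * σ1) with hK
  have hm1 : (0:ℝ) < (m:ℝ) := by exact_mod_cast hm
  have hK0 : 0 ≤ K := div_nonneg (mul_nonneg (by positivity) hC)
    (mul_nonneg hm1.le hσ1.le)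
  -- flattening helpers
  have flatB : ∀ G : S → X → A → ℝ,
      ∑ p ∈ ((univ ×ˢ (B ×ˢ univ)) : Finset (S × X × A)), G p.1 p.2.1 p.2.2
        = ∑ s, ∑ x ∈ B, ∑ a, G s x a := by
    intro G
    rw [Finset.sum_product]
    exact Finset.sum_congr rfl fun s _ => Finset.sum_product _ _ _
  have flat3 : ∀ F : S → X → A → ℝ,
      ∑ q : S × X × A, F q.1 q.2.1 q.2.2 = ∑ s, ∑ x, ∑ a, F s x a := by
    intro F
    rw [Fintype.sum_prod_type]
    exact Finset.sum_congr rfl fun s _ => Fintype.sum_prod_type _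
  have flat2 : ∀ F : S → X → ℝ,
      ∑ p : S × X, F p.1 p.2 = ∑ s, ∑ x, F s x := fun F => Fintype.sum_prod_type _
  -- Step 1 : Minkowski
  have e0 : norm2B ν B (fun s x a => f s x a - Q s x a)
      ≤ norm2B ν B (fun s x a => f s x a - Tf s x a)
        + norm2B ν B (fun s x a => Tf s x a - Q s x a) := by
    unfold norm2B
    rw [← flatB, ← flatB, ← flatB]
    have h := wminkowski ((univ ×ˢ (B ×ˢ univ)) : Finset (S × X × A))
      (fun p => ν p.1 p.2.1 p.2.2)
      (fun p => f p.1 p.2.1 p.2.2 - Tf p.1 p.2.1 p.2.2)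
      (fun p => Tf p.1 p.2.1 p.2.2 - Q p.1 p.2.1 p.2.2)
      (fun p _ => hν.1 _ _ _)
    refine le_trans (le_of_eq ?_) h
    congr 1
    exact Finset.sum_congr rfl fun p _ => by ring
  -- Step 2 : change of measure
  have e1 : norm2B ν B (fun s x a => f s x a - Tf s x a)
      ≤ Real.sqrt K * norm2B (augDist μ β m) B (fun s x a => f s x a - Tf s x a) := by
    unfold norm2B
    have hb : ∀ s x, x ∈ B → ∀ a, ν s x a ≤ K * augDist μ β m s x a := by
      intro s x hx a
      have h1 : ν s x a ≤ marginal ν s a :=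
        Finset.single_le_sum (f := fun x => ν s x a) (fun x _ => hν.1 s x a) (mem_univ x)
      have h2 : marginal ν s a ≤ C * marginal μ s a := hcov s a
      have hmargμ : 0 ≤ marginal μ s a := Finset.sum_nonneg fun x _ => hμ.1 s x a
      have h3 : ((m:ℝ)/((m:ℝ)+1)) * marginal μ s a * σ1 ≤ augDist μ β m s x a := by
        have hb1 : ((m:ℝ)/((m:ℝ)+1)) * marginal μ s a * σ1
            ≤ ((m:ℝ)/((m:ℝ)+1)) * marginal μ s a * β x :=
          mul_le_mul_of_nonneg_left (hβB x hx) (by positivity)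
        have hb2 : 0 ≤ (1/((m:ℝ)+1)) * μ s x a :=
          mul_nonneg (by positivity) (hμ.1 s x a)
        unfold augDist
        have : ((m:ℝ)/((m:ℝ)+1)) * marginal μ s a * β x
            = (m:ℝ)/((m:ℝ)+1) * marginal μ s a * β x := by ring
        linarith
      have hCval : C * marginal μ s a
          = K * (((m:ℝ)/((m:ℝ)+1)) * marginal μ s a * σ1) := by
        rw [hK]
        field_simp
      calc ν s x a ≤ C * marginal μ s a := h1.trans h2
        _ = K * (((m:ℝ)/((m:ℝ)+1)) * marginal μ s a * σ1) := hCval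
        _ ≤ K * augDist μ β m s x a := mul_le_mul_of_nonneg_left h3 hK0
    have hsum : ∑ s, ∑ x ∈ B, ∑ a, ν s x a * (f s x a - Tf s x a) ^ 2
        ≤ K * ∑ s, ∑ x ∈ B, ∑ a, augDist μ β m s x a * (f s x a - Tf s x a) ^ 2 := by
      rw [Finset.mul_sum]
      refine Finset.sum_le_sum fun s _ => ?_
      rw [Finset.mul_sum]
      refine Finset.sum_le_sum fun x hx => ?_
      rw [Finset.mul_sum]
      refine Finset.sum_le_sum fun a _ => ?_
      calc ν s x a * (f s x a - Tf s x a) ^ 2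
          ≤ (K * augDist μ β m s x a) * (f s x a - Tf s x a) ^ 2 :=
            mul_le_mul_of_nonneg_right (hb s x hx a) (sq_nonneg _)
        _ = K * (augDist μ β m s x a * (f s x a - Tf s x a) ^ 2) := by ring
    calc Real.sqrt (∑ s, ∑ x ∈ B, ∑ a, ν s x a * (f s x a - Tf s x a) ^ 2)
        ≤ Real.sqrt (K * ∑ s, ∑ x ∈ B, ∑ a,
            augDist μ β m s x a * (f s x a - Tf s x a) ^ 2) := Real.sqrt_le_sqrt hsum
      _ = _ := Real.sqrt_mul hK0 _
  -- Step 3 : contraction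
  have vdiff : ∀ s x, (Vmin f' s x - Vmin Q s x) ^ 2
      ≤ (f' s x (π s x) - Q s x (π s x)) ^ 2 := by
    intro s x
    have h1 : Vmin f' s x ≤ f' s x (π s x) := Finset.inf'_le _ (Finset.mem_univ _)
    have h2 : Vmin Q s x ≤ Q s x (π s x) := Finset.inf'_le _ (Finset.mem_univ _)
    have h3 : min (f' s x (π s x)) (Q s x (π s x)) ≤ Vmin f' s x :=
      Finset.le_inf' _ _ fun a _ => le_trans (hπ s x a) (min_le_left _ _)
    have h4 : min (f' s x (π s x)) (Q s x (π s x)) ≤ Vmin Q s x :=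
      Finset.le_inf' _ _ fun a _ => le_trans (hπ s x a) (min_le_right _ _)
    rcases le_total (f' s x (π s x)) (Q s x (π s x)) with h | h
    · rw [min_eq_left h] at h3 h4
      nlinarith
    · rw [min_eq_right h] at h3 h4
      nlinarith
  have tdiff : ∀ s x a, Tf s x a - Q s x a
      = γ * ∑ s', P s a s' * (Vmin f' s' (g s x a s') - Vmin Q s' (g s x a s')) := by
    intro s x a
    rw [hQ s x a, hTf]
    simp only [bellman]
    have hsub : ∑ s', P s a s' * (Vmin f' s' (g s x a s') - Vmin Q s' (g s x a s'))
        = ∑ s', P s a s' * Vmin f' s' (g s x a s')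
          - ∑ s', P s a s' * Vmin Q s' (g s x a s') := by
      rw [← Finset.sum_sub_distrib]
      exact Finset.sum_congr rfl fun s' _ => by ring
    rw [hsub]
    ring
  have ptwise : ∀ s x a, (Tf s x a - Q s x a) ^ 2
      ≤ γ ^ 2 * ∑ s', P s a s' *
        (f' s' (g s x a s') (π s' (g s x a s'))
          - Q s' (g s x a s') (π s' (g s x a s'))) ^ 2 := by
    intro s x a
    rw [tdiff s x a, mul_pow]
    refine mul_le_mul_of_nonneg_left ?_ (sq_nonneg γ)
    have hj := jensen univ (P s a)
      (fun s' => Vmin f' s' (g s x a s') - Vmin Q s' (g s x a s'))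
      (fun i _ => hP.1 s a i) (hP.2 s a)
    refine hj.trans (Finset.sum_le_sum fun s' _ =>
      mul_le_mul_of_nonneg_left (vdiff s' (g s x a s')) (hP.1 s a s'))
  -- rewriting the RHS norm
  have key3 : ∑ s', ∑ x', ∑ a', prodPolicy (pushforward P g ν) π s' x' a'
        * (f' s' x' a' - Q s' x' a') ^ 2
      = ∑ s, ∑ x, ∑ a, ν s x a * ∑ s', P s a s' *
        (f' s' (g s x a s') (π s' (g s x a s'))
          - Q s' (g s x a s') (π s' (g s x a s'))) ^ 2 := by
    have step1 : ∀ (s' : S) (x' : X), pushforward P g ν s' x'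
        = ∑ q : S × X × A, ν q.1 q.2.1 q.2.2 * P q.1 q.2.2 s'
            * (if x' = g q.1 q.2.1 q.2.2 s' then 1 else 0) := by
      intro s' x'
      simp only [pushforward]
      exact (flat3 _).symm
    calc ∑ s', ∑ x', ∑ a', prodPolicy (pushforward P g ν) π s' x' a'
          * (f' s' x' a' - Q s' x' a') ^ 2
        = ∑ s', ∑ x', pushforward P g ν s' x'
            * (f' s' x' (π s' x') - Q s' x' (π s' x')) ^ 2 := by
          refine Finset.sum_congr rfl fun s' _ => Finset.sum_congr rfl fun x' _ => ?_
          simp only [prodPolicy, mul_ite, ite_mul, mul_one, mul_zero, one_mul, zero_mul,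
            Finset.sum_ite_eq', Finset.mem_univ, if_true]
      _ = ∑ p : S × X, pushforward P g ν p.1 p.2
            * (f' p.1 p.2 (π p.1 p.2) - Q p.1 p.2 (π p.1 p.2)) ^ 2 := (flat2 _).symm
      _ = ∑ p : S × X, ∑ q : S × X × A,
            (ν q.1 q.2.1 q.2.2 * P q.1 q.2.2 p.1
              * (if p.2 = g q.1 q.2.1 q.2.2 p.1 then 1 else 0))
            * (f' p.1 p.2 (π p.1 p.2) - Q p.1 p.2 (π p.1 p.2)) ^ 2 := by
          refine Finset.sum_congr rfl fun p _ => ?_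
          rw [step1 p.1 p.2, Finset.sum_mul]
      _ = ∑ q : S × X × A, ∑ p : S × X,
            (ν q.1 q.2.1 q.2.2 * P q.1 q.2.2 p.1
              * (if p.2 = g q.1 q.2.1 q.2.2 p.1 then 1 else 0))
            * (f' p.1 p.2 (π p.1 p.2) - Q p.1 p.2 (π p.1 p.2)) ^ 2 := Finset.sum_comm
      _ = ∑ q : S × X × A, ν q.1 q.2.1 q.2.2 * ∑ s', P q.1 q.2.2 s' *
            (f' s' (g q.1 q.2.1 q.2.2 s') (π s' (g q.1 q.2.1 q.2.2 s'))
              - Q s' (g q.1 q.2.1 q.2.2 s') (π s' (g q.1 q.2.1 q.2.2 s'))) ^ 2 := by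
          refine Finset.sum_congr rfl fun q _ => ?_
          rw [flat2 (fun s' x' => (ν q.1 q.2.1 q.2.2 * P q.1 q.2.2 s'
              * (if x' = g q.1 q.2.1 q.2.2 s' then 1 else 0))
            * (f' s' x' (π s' x') - Q s' x' (π s' x')) ^ 2)]
          rw [Finset.mul_sum]
          refine Finset.sum_congr rfl fun s' _ => ?_
          simp only [mul_ite, ite_mul, mul_one, mul_zero, one_mul, zero_mul,
            Finset.sum_ite_eq', Finset.mem_univ, if_true]
          ring
      _ = _ := flat3 (fun s x a => ν s x a * ∑ s', P s a s' *
            (f' s' (g s x a s') (π s' (g s x a s'))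
              - Q s' (g s x a s') (π s' (g s x a s'))) ^ 2)
  have e2 : norm2B ν B (fun s x a => Tf s x a - Q s x a)
      ≤ γ * norm2 (prodPolicy (pushforward P g ν) π)
          (fun s x a => f' s x a - Q s x a) := by
    unfold norm2B norm2
    have hsum : ∑ s, ∑ x ∈ B, ∑ a, ν s x a * (Tf s x a - Q s x a) ^ 2
        ≤ γ ^ 2 * ∑ s', ∑ x', ∑ a', prodPolicy (pushforward P g ν) π s' x' a'
            * (f' s' x' a' - Q s' x' a') ^ 2 := by
      rw [key3]
      calc ∑ s, ∑ x ∈ B, ∑ a, ν s x a * (Tf s x a - Q s x a) ^ 2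
          ≤ ∑ s, ∑ x, ∑ a, ν s x a * (Tf s x a - Q s x a) ^ 2 :=
            Finset.sum_le_sum fun s _ =>
              Finset.sum_le_sum_of_subset_of_nonneg (Finset.subset_univ B)
                (fun x _ _ => Finset.sum_nonneg fun a _ =>
                  mul_nonneg (hν.1 s x a) (sq_nonneg _))
        _ ≤ ∑ s, ∑ x, ∑ a, ν s x a * (γ ^ 2 * ∑ s', P s a s' *
              (f' s' (g s x a s') (π s' (g s x a s'))
                - Q s' (g s x a s') (π s' (g s x a s'))) ^ 2) :=
            Finset.sum_le_sum fun s _ => Finset.sum_le_sum fun x _ =>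
              Finset.sum_le_sum fun a _ =>
                mul_le_mul_of_nonneg_left (ptwise s x a) (hν.1 s x a)
        _ = γ ^ 2 * ∑ s, ∑ x, ∑ a, ν s x a * ∑ s', P s a s' *
              (f' s' (g s x a s') (π s' (g s x a s'))
                - Q s' (g s x a s') (π s' (g s x a s'))) ^ 2 := by
            rw [Finset.mul_sum]
            refine Finset.sum_congr rfl fun s _ => ?_
            rw [Finset.mul_sum]
            refine Finset.sum_congr rfl fun x _ => ?_
            rw [Finset.mul_sum]
            exact Finset.sum_congr rfl fun a _ => by ring
    calc Real.sqrt (∑ s, ∑ x ∈ B, ∑ a, ν s x a * (Tf s x a - Q s x a) ^ 2)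
        ≤ Real.sqrt (γ ^ 2 * ∑ s', ∑ x', ∑ a',
            prodPolicy (pushforward P g ν) π s' x' a'
              * (f' s' x' a' - Q s' x' a') ^ 2) := Real.sqrt_le_sqrt hsum
      _ = γ * Real.sqrt (∑ s', ∑ x', ∑ a',
            prodPolicy (pushforward P g ν) π s' x' a'
              * (f' s' x' a' - Q s' x' a') ^ 2) := by
          rw [Real.sqrt_mul (sq_nonneg γ), Real.sqrt_sq hγ0]
  -- combine
  have hK' : Real.sqrt K * norm2B (augDist μ β m) B
      (fun s x a => f s x a - Tf s x a)
      = Real.sqrt K * norm2B (augDist μ β m) B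
        (fun s x a => f s x a - bellman P g R γ f' s x a) := rfl
  calc norm2B ν B (fun s x a => f s x a - Q s x a)
      ≤ norm2B ν B (fun s x a => f s x a - Tf s x a)
        + norm2B ν B (fun s x a => Tf s x a - Q s x a) := e0
    _ ≤ Real.sqrt K * norm2B (augDist μ β m) B (fun s x a => f s x a - Tf s x a)
        + γ * norm2 (prodPolicy (pushforward P g ν) π)
            (fun s x a => f' s x a - Q s x a) := add_le_add e1 e2
    _ = _ := by rw [hK']
end

section
/- For every distribution μ on S×X×A and all f, f' : S×X×A → ℝ, the expected excess Bellman risk identity holds: Σ_{(s,x,a)} μ(s,x,a) Σ_{s'∈S} P(s'|s,a) [ (f(s,x,a) − R(s,x,a) − γ V_{f'}(s', g(s,x,a,s')))² − ((T f')(s,x,a) − R(s,x,a) − γ V_{f'}(s', g(s,x,a,s')))² ] = ‖f − T f'‖²_{2,μ}. -/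
open Finset

/-- expected excess Bellman risk identity. -/
theorem statement7 {S X A : Type*} [Fintype S] [Fintype X] [Fintype A]
    [Nonempty S] [Nonempty X] [Nonempty A]
    (P : S → A → S → ℝ) (g : S → X → A → S → X) (R : S → X → A → ℝ) (γ : ℝ)
    (hP : IsKernel P) (hγ0 : 0 ≤ γ) (hγ1 : γ < 1)
    (μ : S → X → A → ℝ) (hμ : IsDist3 μ) (f f' : S → X → A → ℝ) :
    ∑ s, ∑ x, ∑ a, μ s x a *
        ∑ s', P s a s' *
          ((f s x a - R s x a - γ * Vmin f' s' (g s x a s')) ^ 2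
            - (bellman P g R γ f' s x a - R s x a - γ * Vmin f' s' (g s x a s')) ^ 2)
      = (norm2 μ (fun s x a => f s x a - bellman P g R γ f' s x a)) ^ 2 := by
  have key : ∀ s x a, ∑ s', P s a s' *
      ((f s x a - R s x a - γ * Vmin f' s' (g s x a s')) ^ 2
        - (bellman P g R γ f' s x a - R s x a - γ * Vmin f' s' (g s x a s')) ^ 2)
      = (f s x a - bellman P g R γ f' s x a) ^ 2 := by
    intro s x a
    have hTdef : bellman P g R γ f' s x a
        = R s x a + γ * ∑ s', P s a s' * Vmin f' s' (g s x a s') := rfl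
    set T := bellman P g R γ f' s x a with hT
    have h1 : ∑ s', P s a s' *
        ((f s x a - R s x a - γ * Vmin f' s' (g s x a s')) ^ 2
          - (T - R s x a - γ * Vmin f' s' (g s x a s')) ^ 2)
        = (f s x a - T) * (f s x a + T - 2 * R s x a) * (∑ s', P s a s')
          - (f s x a - T) * 2 * (γ * ∑ s', P s a s' * Vmin f' s' (g s x a s')) := by
      rw [Finset.mul_sum, Finset.mul_sum, Finset.mul_sum, ← Finset.sum_sub_distrib]
      exact Finset.sum_congr rfl fun s' _ => by ring
    have hγsum : γ * ∑ s', P s a s' * Vmin f' s' (g s x a s') = T - R s x a := by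
      rw [hTdef]; ring
    rw [h1, hγsum, hP.2 s a]; ring
  have hL : ∑ s, ∑ x, ∑ a, μ s x a *
        ∑ s', P s a s' *
          ((f s x a - R s x a - γ * Vmin f' s' (g s x a s')) ^ 2
            - (bellman P g R γ f' s x a - R s x a - γ * Vmin f' s' (g s x a s')) ^ 2)
      = ∑ s, ∑ x, ∑ a, μ s x a * (f s x a - bellman P g R γ f' s x a) ^ 2 := by
    refine Finset.sum_congr rfl fun s _ => Finset.sum_congr rfl fun x _ =>
      Finset.sum_congr rfl fun a _ => ?_
    rw [key]
  rw [hL, norm2, Real.sq_sqrt]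
  refine Finset.sum_nonneg fun s _ => Finset.sum_nonneg fun x _ =>
    Finset.sum_nonneg fun a _ => mul_nonneg (hμ.1 s x a) (sq_nonneg _)
end

section
/- Let μ be a distribution on S×X×A, V_max > 0, and f, f' : S×X×A → ℝ. Assume 0 ≤ f(s,x,a) ≤ V_max and 0 ≤ (T f')(s,x,a) ≤ V_max for all (s,x,a), and 0 ≤ R(s,x,a) + γ V_{f'}(s', g(s,x,a,s')) ≤ V_max for all (s,x,a,s'). Define Y(s,x,a,s') := (f(s,x,a) − R(s,x,a) − γ V_{f'}(s', g(s,x,a,s')))² − ((T f')(s,x,a) − R(s,x,a) − γ V_{f'}(s', g(s,x,a,s')))². Then the second moment of Y under (s,x,a) ∼ μ, s' ∼ P(·|s,a) is bounded as Σ_{(s,x,a)} μ(s,x,a) Σ_{s'} P(s'|s,a) Y(s,x,a,s')² ≤ 4 V_max² ‖f − T f'‖²_{2,μ}; in particular the variance of Y is at most 4 V_max² ‖f − T f'‖²_{2,μ}. -/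
open Finset

/-- variance bound, Eq. (S.12): the second moment (hence the variance)
of the excess loss `Y` is at most `4 V_max² ‖f − T f'‖²_{2,μ}`. -/
theorem statement8 {S X A : Type*} [Fintype S] [Fintype X] [Fintype A]
    [Nonempty S] [Nonempty X] [Nonempty A]
    (P : S → A → S → ℝ) (g : S → X → A → S → X) (R : S → X → A → ℝ) (γ : ℝ)
    (hP : IsKernel P) (hγ0 : 0 ≤ γ) (hγ1 : γ < 1)
    (μ : S → X → A → ℝ) (hμ : IsDist3 μ)
    (Vmax : ℝ) (hV : 0 < Vmax) (f f' : S → X → A → ℝ)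
    (hf : ∀ s x a, 0 ≤ f s x a ∧ f s x a ≤ Vmax)
    (hTf' : ∀ s x a, 0 ≤ bellman P g R γ f' s x a ∧ bellman P g R γ f' s x a ≤ Vmax)
    (htar : ∀ s x a s', 0 ≤ R s x a + γ * Vmin f' s' (g s x a s')
      ∧ R s x a + γ * Vmin f' s' (g s x a s') ≤ Vmax)
    (Y : S → X → A → S → ℝ)
    (hY : ∀ s x a s', Y s x a s'
      = (f s x a - R s x a - γ * Vmin f' s' (g s x a s')) ^ 2
        - (bellman P g R γ f' s x a - R s x a - γ * Vmin f' s' (g s x a s')) ^ 2) :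
    (∑ s, ∑ x, ∑ a, μ s x a * ∑ s', P s a s' * Y s x a s' ^ 2)
        ≤ 4 * Vmax ^ 2 * (norm2 μ (fun s x a => f s x a - bellman P g R γ f' s x a)) ^ 2
      ∧ (∑ s, ∑ x, ∑ a, μ s x a * ∑ s', P s a s' * Y s x a s' ^ 2)
          - (∑ s, ∑ x, ∑ a, μ s x a * ∑ s', P s a s' * Y s x a s') ^ 2
        ≤ 4 * Vmax ^ 2 * (norm2 μ (fun s x a => f s x a - bellman P g R γ f' s x a)) ^ 2 := by
  have hnn : ∀ s x a, 0 ≤ μ s x a := hμ.1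
  have key : ∀ s x a s', Y s x a s' ^ 2
      ≤ 4 * Vmax ^ 2 * (f s x a - bellman P g R γ f' s x a) ^ 2 := by
    intro s x a s'
    have ha := hf s x a
    have hb := hTf' s x a
    have hc := htar s x a s'
    set a0 := f s x a
    set b0 := bellman P g R γ f' s x a
    set c0 := R s x a + γ * Vmin f' s' (g s x a s')
    have hYe : Y s x a s' = (a0 - c0) ^ 2 - (b0 - c0) ^ 2 := by
      rw [hY]; ring
    rw [hYe]
    have h1 : ((a0 - c0) ^ 2 - (b0 - c0) ^ 2) ^ 2
        = (a0 - b0) ^ 2 * (a0 + b0 - 2 * c0) ^ 2 := by ring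
    rw [h1]
    have h2 : (a0 + b0 - 2 * c0) ^ 2 ≤ 4 * Vmax ^ 2 := by nlinarith [ha.1, ha.2, hb.1, hb.2, hc.1, hc.2]
    calc (a0 - b0) ^ 2 * (a0 + b0 - 2 * c0) ^ 2
        ≤ (a0 - b0) ^ 2 * (4 * Vmax ^ 2) := mul_le_mul_of_nonneg_left h2 (sq_nonneg _)
      _ = 4 * Vmax ^ 2 * (a0 - b0) ^ 2 := by ring
  have hnorm : (norm2 μ (fun s x a => f s x a - bellman P g R γ f' s x a)) ^ 2
      = ∑ s, ∑ x, ∑ a, μ s x a * (f s x a - bellman P g R γ f' s x a) ^ 2 := by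
    unfold norm2
    exact Real.sq_sqrt (Finset.sum_nonneg fun s _ => Finset.sum_nonneg fun x _ =>
      Finset.sum_nonneg fun a _ => mul_nonneg (hnn s x a) (sq_nonneg _))
  have main : (∑ s, ∑ x, ∑ a, μ s x a * ∑ s', P s a s' * Y s x a s' ^ 2)
      ≤ 4 * Vmax ^ 2 * (norm2 μ (fun s x a => f s x a - bellman P g R γ f' s x a)) ^ 2 := by
    rw [hnorm, Finset.mul_sum]
    refine Finset.sum_le_sum fun s _ => ?_
    rw [Finset.mul_sum]
    refine Finset.sum_le_sum fun x _ => ?_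
    rw [Finset.mul_sum]
    refine Finset.sum_le_sum fun a _ => ?_
    have hinner : (∑ s', P s a s' * Y s x a s' ^ 2)
        ≤ 4 * Vmax ^ 2 * (f s x a - bellman P g R γ f' s x a) ^ 2 := by
      calc (∑ s', P s a s' * Y s x a s' ^ 2)
          ≤ ∑ s', P s a s' * (4 * Vmax ^ 2 * (f s x a - bellman P g R γ f' s x a) ^ 2) :=
            Finset.sum_le_sum fun s' _ =>
              mul_le_mul_of_nonneg_left (key s x a s') (hP.1 s a s')
        _ = (∑ s', P s a s') * (4 * Vmax ^ 2 * (f s x a - bellman P g R γ f' s x a) ^ 2) := by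
            rw [Finset.sum_mul]
        _ = 4 * Vmax ^ 2 * (f s x a - bellman P g R γ f' s x a) ^ 2 := by
            rw [hP.2 s a, one_mul]
    calc μ s x a * ∑ s', P s a s' * Y s x a s' ^ 2
        ≤ μ s x a * (4 * Vmax ^ 2 * (f s x a - bellman P g R γ f' s x a) ^ 2) :=
          mul_le_mul_of_nonneg_left hinner (hnn s x a)
      _ = 4 * Vmax ^ 2 * (μ s x a * (f s x a - bellman P g R γ f' s x a) ^ 2) := by ring
  exact ⟨main, (sub_le_self _ (sq_nonneg _)).trans main⟩
end

section
/- Let μ be a distribution on S×X×A, β a distribution on X, m a positive integer, and f, f' : S×X×A → ℝ. Consider the random augmented dataset produced by ASG: n i.i.d. real samples (s_i, x_i, a_i, s_i') with (s_i,x_i,a_i) ∼ μ and s_i' ∼ P(·|s_i,a_i), and for each real sample i, m i.i.d. virtual pseudo-states x̂_{i,1},…,x̂_{i,m} ∼ β independent of everything else, each yielding the virtual sample (s_i, x̂_{i,j}, a_i, s_i'). For h : S×X×A → ℝ define the empirical loss L̂(h; f') := (1/(n(m+1))) [ Σ_i (h(s_i,x_i,a_i) − R(s_i,x_i,a_i)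 − γ V_{f'}(s_i', g(s_i,x_i,a_i,s_i')))² + Σ_{i,j} (h(s_i,x̂_{i,j},a_i) − R(s_i,x̂_{i,j},a_i) − γ V_{f'}(s_i', g(s_i,x̂_{i,j},a_i,s_i')))² ]. Then E[L̂(f; f')] − E[L̂(T f'; f')] = ‖f − T f'‖²_{2, μ̄_β}, where the expectation is over the random draw of the real samples and the virtual pseudo-states. -/
open Finset

/-- The empirical squared Bellman loss of `h` (with target built from `f'`) on the augmented
dataset consisting of `n` real samples `real i = (s_i, x_i, a_i, s_i')` and, for each `i`,
the `m` virtual samples with pseudo-states `virt i j`. -/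
noncomputable def empLoss {S X A : Type*} [Fintype S] [Nonempty A] [Fintype A] [Fintype X]
    (R : S → X → A → ℝ) (g : S → X → A → S → X) (γ : ℝ) (f' h : S → X → A → ℝ)
    {n m : ℕ} (real : Fin n → S × X × A × S) (virt : Fin n → Fin m → X) : ℝ :=
  (1 / ((n : ℝ) * ((m : ℝ) + 1))) *
    ((∑ i, (h (real i).1 (real i).2.1 (real i).2.2.1
        - R (real i).1 (real i).2.1 (real i).2.2.1
        - γ * Vmin f' (real i).2.2.2
            (g (real i).1 (real i).2.1 (real i).2.2.1 (real i).2.2.2)) ^ 2)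
      + ∑ i, ∑ j, (h (real i).1 (virt i j) (real i).2.2.1
        - R (real i).1 (virt i j) (real i).2.2.1
        - γ * Vmin f' (real i).2.2.2
            (g (real i).1 (virt i j) (real i).2.2.1 (real i).2.2.2)) ^ 2)


lemma asg_sum_prod_one {ι T : Type*} [Fintype ι] [Fintype T] [DecidableEq ι]
    (w : T → ℝ) (hw : ∑ t, w t = 1) :
    ∑ ω : ι → T, ∏ i, w (ω i) = 1 := by
  rw [← Fintype.piFinset_univ,
    ← Finset.prod_univ_sum (fun _ : ι => (Finset.univ : Finset T)) (fun _ t => w t)]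
  simp [hw]

lemma asg_marg {ι T : Type*} [Fintype ι] [Fintype T] [DecidableEq ι]
    (w : T → ℝ) (hw : ∑ t, w t = 1) (k : ι) (F : T → ℝ) :
    ∑ ω : ι → T, (∏ i, w (ω i)) * F (ω k) = ∑ t, w t * F t := by
  have h1 : ∀ ω : ι → T, (∏ i, w (ω i)) * F (ω k)
      = ∏ i, (if i = k then w (ω i) * F (ω i) else w (ω i)) := by
    intro ω
    have : ∀ i : ι, (if i = k then w (ω i) * F (ω i) else w (ω i))
        = w (ω i) * (if i = k then F (ω i) else 1) := by
      intro i; split_ifs <;> ring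
    simp only [this, Finset.prod_mul_distrib]
    congr 1
    simp [Finset.prod_ite_eq' Finset.univ k (fun i => F (ω i))]
  simp only [h1]
  rw [← Fintype.piFinset_univ,
    ← Finset.prod_univ_sum (fun _ : ι => (Finset.univ : Finset T))
      (fun i t => if i = k then w t * F t else w t)]
  have h2 : ∀ i : ι, (∑ t, if i = k then w t * F t else w t)
      = (if i = k then ∑ t, w t * F t else 1) := by
    intro i; split_ifs <;> simp [hw]
  rw [Finset.prod_congr rfl (fun i _ => h2 i)]
  simp

lemma asg_Eaux {T U : Type*} [Fintype T] [Fintype U] (w : T → ℝ) (b : U → ℝ)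
    (hw : ∑ t, w t = 1) (hb : ∑ u, b u = 1) {n : ℕ} (k : Fin n)
    (H : T → U → ℝ) :
    ∑ ω : (Fin n → T) × (Fin n → U),
      ((∏ i, w (ω.1 i)) * ∏ i, b (ω.2 i)) * H (ω.1 k) (ω.2 k)
    = ∑ t, w t * ∑ u, b u * H t u := by
  rw [Fintype.sum_prod_type]
  have inner : ∀ r : Fin n → T,
      (∑ v : Fin n → U, ((∏ i, w (r i)) * ∏ i, b (v i)) * H (r k) (v k))
      = (∏ i, w (r i)) * ∑ u, b u * H (r k) u := by
    intro r
    rw [← asg_marg b hb k (fun u => H (r k) u), Finset.mul_sum]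
    exact Finset.sum_congr rfl fun v _ => by ring
  simp only [inner]
  exact asg_marg w hw k (fun t => ∑ u, b u * H t u)

lemma asg_Emain {T X : Type*} [Fintype T] [Fintype X] (w : T → ℝ) (β : X → ℝ)
    (hw : ∑ t, w t = 1) (hβ : ∑ x, β x = 1) (n m : ℕ)
    (D : T → X → ℝ) (e : T → X) :
    ∑ ω : (Fin n → T) × (Fin n → Fin m → X),
      ((∏ i, w (ω.1 i)) * ∏ i, ∏ j, β (ω.2 i j)) *
      ((∑ i, D (ω.1 i) (e (ω.1 i))) + ∑ i, ∑ j, D (ω.1 i) (ω.2 i j))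
    = (n : ℝ) * (∑ t, w t * D t (e t))
      + (n : ℝ) * (m : ℝ) * (∑ t, w t * ∑ x, β x * D t x) := by
  have hb1 : ∑ u : Fin m → X, ∏ j, β (u j) = 1 := asg_sum_prod_one β hβ
  simp only [mul_add, Finset.sum_add_distrib]
  congr 1
  · calc ∑ ω : (Fin n → T) × (Fin n → Fin m → X),
          ((∏ i, w (ω.1 i)) * ∏ i, ∏ j, β (ω.2 i j)) * ∑ i, D (ω.1 i) (e (ω.1 i))
        = ∑ i : Fin n, ∑ ω : (Fin n → T) × (Fin n → Fin m → X),
          ((∏ i, w (ω.1 i)) * ∏ i, ∏ j, β (ω.2 i j)) * D (ω.1 i) (e (ω.1 i)) := by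
          simp only [Finset.mul_sum]; exact Finset.sum_comm
      _ = ∑ _i : Fin n, ∑ t, w t * D t (e t) := by
          refine Finset.sum_congr rfl fun k _ => ?_
          calc ∑ ω : (Fin n → T) × (Fin n → Fin m → X),
              ((∏ i, w (ω.1 i)) * ∏ i, ∏ j, β (ω.2 i j)) * D (ω.1 k) (e (ω.1 k))
              = ∑ t, w t * ∑ u : Fin m → X, (∏ j, β (u j)) * D t (e t) :=
                asg_Eaux w (fun u : Fin m → X => ∏ j, β (u j)) hw hb1 k (fun t _ => D t (e t))
            _ = ∑ t, w t * D t (e t) := by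
                refine Finset.sum_congr rfl fun t _ => ?_
                rw [← Finset.sum_mul, hb1, one_mul]
      _ = (n : ℝ) * ∑ t, w t * D t (e t) := by
          simp [Finset.sum_const, Finset.card_univ, nsmul_eq_mul]
  · calc ∑ ω : (Fin n → T) × (Fin n → Fin m → X),
          ((∏ i, w (ω.1 i)) * ∏ i, ∏ j, β (ω.2 i j)) * ∑ i, ∑ j, D (ω.1 i) (ω.2 i j)
        = ∑ i : Fin n, ∑ ω : (Fin n → T) × (Fin n → Fin m → X),
          ∑ j : Fin m, ((∏ i, w (ω.1 i)) * ∏ i, ∏ j, β (ω.2 i j)) * D (ω.1 i) (ω.2 i j) := by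
          simp only [Finset.mul_sum]; exact Finset.sum_comm
      _ = ∑ i : Fin n, ∑ j : Fin m, ∑ ω : (Fin n → T) × (Fin n → Fin m → X),
          ((∏ i, w (ω.1 i)) * ∏ i, ∏ j, β (ω.2 i j)) * D (ω.1 i) (ω.2 i j) := by
          exact Finset.sum_congr rfl fun i _ => Finset.sum_comm
      _ = ∑ _i : Fin n, ∑ _j : Fin m, ∑ t, w t * ∑ x, β x * D t x := by
          refine Finset.sum_congr rfl fun k _ => Finset.sum_congr rfl fun l _ => ?_
          calc ∑ ω : (Fin n → T) × (Fin n → Fin m → X),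
              ((∏ i, w (ω.1 i)) * ∏ i, ∏ j, β (ω.2 i j)) * D (ω.1 k) (ω.2 k l)
              = ∑ t, w t * ∑ u : Fin m → X, (∏ j, β (u j)) * D t (u l) :=
                asg_Eaux w (fun u : Fin m → X => ∏ j, β (u j)) hw hb1 k (fun t u => D t (u l))
            _ = ∑ t, w t * ∑ x, β x * D t x := by
                refine Finset.sum_congr rfl fun t _ => ?_
                rw [asg_marg β hβ l (fun x => D t x)]
      _ = (n : ℝ) * (m : ℝ) * (∑ t, w t * ∑ x, β x * D t x) := by
          simp [Finset.sum_const, Finset.card_univ, nsmul_eq_mul]; ring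

/-- Lemma S.6: `E[L̂(f;f')] − E[L̂(T f';f')] = ‖f − T f'‖²_{2,μ̄_β}`, the
expectation being over the i.i.d. real samples and the i.i.d. virtual pseudo-states. -/
theorem statement9 {S X A : Type*} [Fintype S] [Fintype X] [Fintype A]
    [Nonempty S] [Nonempty X] [Nonempty A]
    (P : S → A → S → ℝ) (g : S → X → A → S → X) (R : S → X → A → ℝ) (γ : ℝ)
    (hP : IsKernel P) (hγ0 : 0 ≤ γ) (hγ1 : γ < 1)
    (μ : S → X → A → ℝ) (hμ : IsDist3 μ) (β : X → ℝ) (hβ : IsDist1 β)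
    (n m : ℕ) (hn : 0 < n) (hm : 0 < m)
    (f f' : S → X → A → ℝ) :
    (∑ ω : (Fin n → S × X × A × S) × (Fin n → Fin m → X),
        ((∏ i, μ (ω.1 i).1 (ω.1 i).2.1 (ω.1 i).2.2.1
            * P (ω.1 i).1 (ω.1 i).2.2.1 (ω.1 i).2.2.2)
          * ∏ i, ∏ j, β (ω.2 i j))
        * empLoss R g γ f' f ω.1 ω.2)
    - (∑ ω : (Fin n → S × X × A × S) × (Fin n → Fin m → X),
        ((∏ i, μ (ω.1 i).1 (ω.1 i).2.1 (ω.1 i).2.2.1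
            * P (ω.1 i).1 (ω.1 i).2.2.1 (ω.1 i).2.2.2)
          * ∏ i, ∏ j, β (ω.2 i j))
        * empLoss R g γ f' (bellman P g R γ f') ω.1 ω.2)
      = (norm2 (augDist μ β m) (fun s x a => f s x a - bellman P g R γ f' s x a)) ^ 2 := by
  classical
  obtain ⟨hP0, hP1⟩ := hP
  obtain ⟨hμ0, hμ1⟩ := hμ
  obtain ⟨hβ0, hβ1⟩ := hβ
  have hn' : (n : ℝ) ≠ 0 := Nat.cast_ne_zero.mpr hn.ne'
  have hm1 : ((m : ℝ) + 1) ≠ 0 := by positivity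
  -- the Bellman target
  set T := bellman P g R γ f' with hTdef
  -- key pointwise identity
  have key : ∀ (s : S) (x : X) (a : A),
      (∑ s', P s a s' *
        ((f s x a - R s x a - γ * Vmin f' s' (g s x a s')) ^ 2
         - (T s x a - R s x a - γ * Vmin f' s' (g s x a s')) ^ 2))
      = (f s x a - T s x a) ^ 2 := by
    intro s x a
    have hb : T s x a
        = R s x a + γ * ∑ s', P s a s' * Vmin f' s' (g s x a s') := rfl
    set q := ∑ s', P s a s' * Vmin f' s' (g s x a s') with hq
    have h1 : ∀ s' : S, P s a s' *
        ((f s x a - R s x a - γ * Vmin f' s' (g s x a s')) ^ 2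
         - (T s x a - R s x a - γ * Vmin f' s' (g s x a s')) ^ 2)
        = ((f s x a - R s x a) ^ 2 - γ ^ 2 * q ^ 2) * P s a s'
          - (2 * γ * (f s x a - R s x a - γ * q)) * (P s a s' * Vmin f' s' (g s x a s')) := by
      intro s'; rw [hb]; ring
    rw [Finset.sum_congr rfl fun s' _ => h1 s', Finset.sum_sub_distrib, ← Finset.mul_sum,
      ← Finset.mul_sum, hP1, ← hq, hb]
    ring
  -- weight on a real sample
  set w : S × X × A × S → ℝ := fun t => μ t.1 t.2.1 t.2.2.1 * P t.1 t.2.2.1 t.2.2.2 with hwdef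
  have hW1 : ∑ t : S × X × A × S, w t = 1 := by
    simp only [hwdef, Fintype.sum_prod_type, ← Finset.mul_sum, hP1, mul_one]
    exact hμ1
  -- per-sample squared-loss difference
  set D : S × X × A × S → X → ℝ := fun t x =>
    (f t.1 x t.2.2.1 - R t.1 x t.2.2.1
      - γ * Vmin f' t.2.2.2 (g t.1 x t.2.2.1 t.2.2.2)) ^ 2
    - (T t.1 x t.2.2.1 - R t.1 x t.2.2.1
      - γ * Vmin f' t.2.2.2 (g t.1 x t.2.2.1 t.2.2.2)) ^ 2 with hDdef
  have hdiff : ∀ (real : Fin n → S × X × A × S) (virt : Fin n → Fin m → X),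
      empLoss R g γ f' f real virt - empLoss R g γ f' T real virt
      = (1 / ((n : ℝ) * ((m : ℝ) + 1))) *
        ((∑ i, D (real i) ((real i).2.1)) + ∑ i, ∑ j, D (real i) (virt i j)) := by
    intro real virt
    simp only [empLoss, hDdef, ← mul_sub]
    congr 1
    simp only [Finset.sum_sub_distrib]
    ring
  -- combine the two expectations
  have hcomb : (∑ ω : (Fin n → S × X × A × S) × (Fin n → Fin m → X),
        ((∏ i, μ (ω.1 i).1 (ω.1 i).2.1 (ω.1 i).2.2.1
            * P (ω.1 i).1 (ω.1 i).2.2.1 (ω.1 i).2.2.2)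
          * ∏ i, ∏ j, β (ω.2 i j))
        * empLoss R g γ f' f ω.1 ω.2)
      - (∑ ω : (Fin n → S × X × A × S) × (Fin n → Fin m → X),
        ((∏ i, μ (ω.1 i).1 (ω.1 i).2.1 (ω.1 i).2.2.1
            * P (ω.1 i).1 (ω.1 i).2.2.1 (ω.1 i).2.2.2)
          * ∏ i, ∏ j, β (ω.2 i j))
        * empLoss R g γ f' T ω.1 ω.2)
      = (1 / ((n : ℝ) * ((m : ℝ) + 1))) *
        ∑ ω : (Fin n → S × X × A × S) × (Fin n → Fin m → X),
          ((∏ i, w (ω.1 i)) * ∏ i, ∏ j, β (ω.2 i j)) *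
          ((∑ i, D (ω.1 i) ((ω.1 i).2.1)) + ∑ i, ∑ j, D (ω.1 i) (ω.2 i j)) := by
    rw [← Finset.sum_sub_distrib, Finset.mul_sum]
    refine Finset.sum_congr rfl fun ω _ => ?_
    rw [← mul_sub, hdiff ω.1 ω.2]
    ring
  rw [hcomb,
    asg_Emain w β hW1 hβ1 n m D (fun t => t.2.1)]
  -- compute the two marginal sums
  have hA : ∑ t : S × X × A × S, w t * D t t.2.1
      = ∑ s, ∑ x, ∑ a, μ s x a * (f s x a - T s x a) ^ 2 := by
    simp only [hwdef, hDdef, Fintype.sum_prod_type]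
    refine Finset.sum_congr rfl fun s _ => Finset.sum_congr rfl fun x _ =>
      Finset.sum_congr rfl fun a _ => ?_
    rw [← key s x a, Finset.mul_sum]
    exact Finset.sum_congr rfl fun s' _ => by ring
  have hB : ∑ t : S × X × A × S, w t * ∑ x, β x * D t x
      = ∑ s, ∑ a, marginal μ s a * ∑ x, β x * (f s x a - T s x a) ^ 2 := by
    simp only [hwdef, hDdef, Fintype.sum_prod_type]
    refine Finset.sum_congr rfl fun s _ => ?_
    rw [Finset.sum_comm]
    refine Finset.sum_congr rfl fun a _ => ?_
    have step : ∀ x' : X, (∑ s', (μ s x' a * P s a s') *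
        ∑ x, β x * ((f s x a - R s x a - γ * Vmin f' s' (g s x a s')) ^ 2
          - (T s x a - R s x a - γ * Vmin f' s' (g s x a s')) ^ 2))
        = μ s x' a * ∑ x, β x * (f s x a - T s x a) ^ 2 := by
      intro x'
      have swap : (∑ s', (μ s x' a * P s a s') *
          ∑ x, β x * ((f s x a - R s x a - γ * Vmin f' s' (g s x a s')) ^ 2
            - (T s x a - R s x a - γ * Vmin f' s' (g s x a s')) ^ 2))
          = ∑ x, μ s x' a * (β x * (∑ s', P s a s' *
            ((f s x a - R s x a - γ * Vmin f' s' (g s x a s')) ^ 2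
              - (T s x a - R s x a - γ * Vmin f' s' (g s x a s')) ^ 2))) := by
        simp only [Finset.mul_sum]
        rw [Finset.sum_comm]
        exact Finset.sum_congr rfl fun x _ => Finset.sum_congr rfl fun s' _ => by ring
      rw [swap]
      simp only [key s _ a]
      rw [← Finset.mul_sum]
    rw [Finset.sum_congr rfl fun x' _ => step x', ← Finset.sum_mul, marginal]
  rw [hA, hB]
  -- evaluate the squared norm
  have hsq : ∀ s x a, (fun s x a => f s x a - bellman P g R γ f' s x a) s x a
      = f s x a - T s x a := fun _ _ _ => rfl
  have hpos : 0 ≤ ∑ s, ∑ x, ∑ a, augDist μ β m s x a *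
      ((fun s x a => f s x a - bellman P g R γ f' s x a) s x a) ^ 2 := by
    refine Finset.sum_nonneg fun s _ => Finset.sum_nonneg fun x _ =>
      Finset.sum_nonneg fun a _ => mul_nonneg ?_ (sq_nonneg _)
    have hmarg : 0 ≤ marginal μ s a := Finset.sum_nonneg fun x' _ => hμ0 s x' a
    unfold augDist
    have h0 : (0:ℝ) ≤ (m:ℝ) / ((m:ℝ) + 1) := by positivity
    have h1 : (0:ℝ) ≤ 1 / ((m:ℝ) + 1) := by positivity
    exact add_nonneg (mul_nonneg h1 (hμ0 s x a))
      (mul_nonneg (mul_nonneg h0 hmarg) (hβ0 x))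
  rw [norm2, Real.sq_sqrt hpos]
  simp only [hsq]
  -- final algebra
  have hRHS : ∑ s, ∑ x, ∑ a, augDist μ β m s x a * (f s x a - T s x a) ^ 2
      = (1 / ((m : ℝ) + 1)) * (∑ s, ∑ x, ∑ a, μ s x a * (f s x a - T s x a) ^ 2)
        + ((m : ℝ) / ((m : ℝ) + 1)) *
          (∑ s, ∑ a, marginal μ s a * ∑ x, β x * (f s x a - T s x a) ^ 2) := by
    have expand : ∀ s x a, augDist μ β m s x a * (f s x a - T s x a) ^ 2
        = (1 / ((m : ℝ) + 1)) * (μ s x a * (f s x a - T s x a) ^ 2)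
          + ((m : ℝ) / ((m : ℝ) + 1)) *
            (marginal μ s a * (β x * (f s x a - T s x a) ^ 2)) := by
      intro s x a; unfold augDist; ring
    simp only [expand, Finset.sum_add_distrib]
    congr 1
    · simp only [← Finset.mul_sum]
    · simp only [← Finset.mul_sum]
      congr 1
      refine Finset.sum_congr rfl fun s _ => ?_
      rw [Finset.sum_comm]
      exact Finset.sum_congr rfl fun a _ => (Finset.mul_sum _ _ _).symm
  rw [hRHS]
  field_simp
end

section
/- (Performance-difference bound for greedy policies.) Let Q* : S×X×A → ℝ satisfy Q* = T Q*, let π* : S×X → A be a selection with π*(s,x) ∈ argmin_{a∈A} Q*(s,x,a), let f : S×X×A → ℝ and let π_f : S×X → A be a selection with π_f(s,x) ∈ argmin_{a∈A} f(s,x,a). Let η₀ be a distribution on S×X. Then v^{π_f} − v^{π*} ≤ (1/(1−γ)) · ( ‖Q* − f‖_{2, d^{π_f}_{η₀} × π_f} + ‖Q* − f‖_{2, d^{π_f}_{η₀} × π*} ), where v^π := Σ_{(s,x)} η₀(s,x) V^π(s,x). -/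
open Finset

/-- One step of the Markov kernel `M_π` induced on `S × X` by a deterministic policy `π`. -/
noncomputable def stepDist {S X A : Type*} [Fintype S] [Fintype X] [DecidableEq X]
    (P : S → A → S → ℝ) (g : S → X → A → S → X) (π : S → X → A)
    (η : S → X → ℝ) (s' : S) (x' : X) : ℝ :=
  ∑ s, ∑ x, η s x * P s (π s x) s' * (if x' = g s x (π s x) s' then 1 else 0)

/-- The discounted occupancy measure `d^π_{η₀}(s,x) = (1−γ) Σ_t γ^t (η₀ M_π^t)(s,x)`. -/
noncomputable def occupancy {S X A : Type*} [Fintype S] [Fintype X] [DecidableEq X]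
    (P : S → A → S → ℝ) (g : S → X → A → S → X) (π : S → X → A) (γ : ℝ)
    (η0 : S → X → ℝ) (s : S) (x : X) : ℝ :=
  (1 - γ) * ∑' t : ℕ, γ ^ t * ((stepDist P g π)^[t] η0) s x


-- Auxiliary lemmas
section Aux
variable {S X A : Type*} [Fintype S] [Fintype X] [Fintype A] [DecidableEq X]

lemma step_dual (P : S → A → S → ℝ) (g : S → X → A → S → X) (π : S → X → A)
    (η : S → X → ℝ) (h : S → X → ℝ) :
    ∑ s', ∑ x', stepDist P g π η s' x' * h s' x'
      = ∑ s, ∑ x, η s x * ∑ s', P s (π s x) s' * h s' (g s x (π s x) s') := by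
  unfold stepDist
  simp only [Finset.sum_mul, Finset.mul_sum]
  conv_lhs => rw [Finset.sum_comm]; enter [2, x']; rw [Finset.sum_comm]; enter [2, s]; rw [Finset.sum_comm]
  conv_lhs => rw [Finset.sum_comm]; enter [2, s]; rw [Finset.sum_comm]; enter [2, x]; rw [Finset.sum_comm]
  refine Finset.sum_congr rfl fun s _ => Finset.sum_congr rfl fun x _ => Finset.sum_congr rfl fun s' _ => ?_
  simp [ite_mul, mul_ite, mul_assoc]

end Aux
set_option linter.unusedSectionVars false

section Aux2
variable {S X A : Type*} [Fintype S] [Fintype X] [Fintype A] [DecidableEq X]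
variable {P : S → A → S → ℝ} {g : S → X → A → S → X} {π : S → X → A}

lemma step_nonneg (hP : IsKernel P) {η : S → X → ℝ} (hη : ∀ s x, 0 ≤ η s x)
    (s' : S) (x' : X) : 0 ≤ stepDist P g π η s' x' := by
  refine Finset.sum_nonneg fun s _ => Finset.sum_nonneg fun x _ => ?_
  have h1 := hP.1 s (π s x) s'
  have h2 : (0:ℝ) ≤ if x' = g s x (π s x) s' then 1 else 0 := by split <;> norm_num
  exact mul_nonneg (mul_nonneg (hη s x) h1) h2

lemma step_mass (hP : IsKernel P) (η : S → X → ℝ) :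
    ∑ s', ∑ x', stepDist P g π η s' x' = ∑ s, ∑ x, η s x := by
  have := step_dual P g π η (fun _ _ => (1:ℝ))
  simpa [hP.2] using this

lemma iter_nonneg (hP : IsKernel P) {η : S → X → ℝ} (hη : ∀ s x, 0 ≤ η s x) (t : ℕ) :
    ∀ s x, 0 ≤ ((stepDist P g π)^[t] η) s x := by
  induction t with
  | zero => simpa using hη
  | succ n ih =>
    rw [Function.iterate_succ_apply']
    exact step_nonneg hP ih

lemma iter_mass (hP : IsKernel P) {η : S → X → ℝ} (hη : ∑ s, ∑ x, η s x = 1) (t : ℕ) :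
    ∑ s, ∑ x, ((stepDist P g π)^[t] η) s x = 1 := by
  induction t with
  | zero => simpa using hη
  | succ n ih =>
    rw [Function.iterate_succ_apply', step_mass hP, ih]

lemma iter_le_one (hP : IsKernel P) {η : S → X → ℝ} (hη : IsDist2 η) (t : ℕ) (s : S) (x : X) :
    ((stepDist P g π)^[t] η) s x ≤ 1 := by
  have h1 := iter_mass (π := π) (g := g) hP hη.2 t
  have h0 := iter_nonneg (π := π) (g := g) hP hη.1 t
  calc ((stepDist P g π)^[t] η) s x
      ≤ ∑ x', ((stepDist P g π)^[t] η) s x' :=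
        Finset.single_le_sum (fun x' _ => h0 s x') (Finset.mem_univ x)
    _ ≤ ∑ s', ∑ x', ((stepDist P g π)^[t] η) s' x' :=
        Finset.single_le_sum (f := fun s' => ∑ x', ((stepDist P g π)^[t] η) s' x')
          (fun s' _ => Finset.sum_nonneg fun x' _ => h0 s' x') (Finset.mem_univ s)
    _ = 1 := h1

lemma occ_summable (hP : IsKernel P) {γ : ℝ} (hγ0 : 0 ≤ γ) (hγ1 : γ < 1)
    {η : S → X → ℝ} (hη : IsDist2 η) (s : S) (x : X) :
    Summable (fun t : ℕ => γ ^ t * ((stepDist P g π)^[t] η) s x) := by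
  refine Summable.of_nonneg_of_le (fun t => ?_) (fun t => ?_)
    (summable_geometric_of_lt_one hγ0 hγ1)
  · have := iter_nonneg (π := π) (g := g) hP hη.1 t s x
    positivity
  · have h1 := iter_le_one (π := π) (g := g) hP hη t s x
    have : γ ^ t * ((stepDist P g π)^[t] η) s x ≤ γ ^ t * 1 :=
      mul_le_mul_of_nonneg_left h1 (pow_nonneg hγ0 t)
    simpa using this

end Aux2
section Aux3
variable {S X A : Type*} [Fintype S] [Fintype X] [Fintype A] [DecidableEq X]

lemma contraction_zero [Nonempty S] [Nonempty X]
    {P : S → A → S → ℝ} {g : S → X → A → S → X} {π : S → X → A}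
    (hP : IsKernel P) {γ : ℝ} (hγ0 : 0 ≤ γ) (hγ1 : γ < 1) {h : S → X → ℝ}
    (hrec : ∀ s x, h s x = γ * ∑ s', P s (π s x) s' * h s' (g s x (π s x) s')) :
    ∀ s x, h s x = 0 := by
  set M : ℝ := Finset.univ.sup' Finset.univ_nonempty (fun p : S × X => |h p.1 p.2|) with hM
  have hle : ∀ s x, |h s x| ≤ M := fun s x =>
    Finset.le_sup' (fun p : S × X => |h p.1 p.2|) (Finset.mem_univ (s, x))
  obtain ⟨p, -, hp⟩ := Finset.exists_mem_eq_sup' (Finset.univ_nonempty)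
    (fun p : S × X => |h p.1 p.2|)
  have key : |h p.1 p.2| ≤ γ * M := by
    rw [hrec p.1 p.2, abs_mul, abs_of_nonneg hγ0]
    refine mul_le_mul_of_nonneg_left ?_ hγ0
    calc |∑ s', P p.1 (π p.1 p.2) s' * h s' (g p.1 p.2 (π p.1 p.2) s')|
        ≤ ∑ s', |P p.1 (π p.1 p.2) s' * h s' (g p.1 p.2 (π p.1 p.2) s')| :=
          Finset.abs_sum_le_sum_abs _ _
      _ ≤ ∑ s', P p.1 (π p.1 p.2) s' * M := by
          refine Finset.sum_le_sum fun s' _ => ?_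
          rw [abs_mul, abs_of_nonneg (hP.1 _ _ _)]
          exact mul_le_mul_of_nonneg_left (hle _ _) (hP.1 _ _ _)
      _ = M := by rw [← Finset.sum_mul, hP.2, one_mul]
  have hMγ : M ≤ γ * M := le_of_eq_of_le (hM.trans hp) key
  have hM0 : M ≤ 0 := by nlinarith
  intro s x
  have h1 := hle s x
  exact abs_eq_zero.mp (le_antisymm (h1.trans hM0) (abs_nonneg _))

lemma l1_le_l2 {ι : Type*} [Fintype ι] (d w : ι → ℝ) (hd : ∀ i, 0 ≤ d i)
    (hd1 : ∑ i, d i = 1) :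
    ∑ i, d i * w i ≤ Real.sqrt (∑ i, d i * w i ^ 2) := by
  have h1 : ∑ i, d i * w i ≤ ∑ i, Real.sqrt (d i) * (Real.sqrt (d i) * |w i|) := by
    refine Finset.sum_le_sum fun i _ => ?_
    rw [← mul_assoc, Real.mul_self_sqrt (hd i)]
    exact mul_le_mul_of_nonneg_left (le_abs_self _) (hd i)
  refine h1.trans ?_
  have hnn : 0 ≤ ∑ i, Real.sqrt (d i) * (Real.sqrt (d i) * |w i|) :=
    Finset.sum_nonneg fun i _ => by positivity
  rw [Real.le_sqrt hnn (Finset.sum_nonneg fun i _ => mul_nonneg (hd i) (sq_nonneg _))]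
  have h2 := Finset.sum_mul_sq_le_sq_mul_sq Finset.univ (fun i => Real.sqrt (d i))
    (fun i => Real.sqrt (d i) * |w i|)
  have e1 : ∑ i, Real.sqrt (d i) ^ 2 = 1 := by
    rw [← hd1]; exact Finset.sum_congr rfl fun i _ => Real.sq_sqrt (hd i)
  have e2 : ∑ i, (Real.sqrt (d i) * |w i|) ^ 2 = ∑ i, d i * w i ^ 2 :=
    Finset.sum_congr rfl fun i _ => by rw [mul_pow, Real.sq_sqrt (hd i), sq_abs]
  rw [e1, e2, one_mul] at h2
  simpa [mul_assoc] using h2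

end Aux3
section Aux4
variable {S X A : Type*} [Fintype S] [Fintype X] [Fintype A] [DecidableEq X]
variable {P : S → A → S → ℝ} {g : S → X → A → S → X} {π : S → X → A}

lemma summable_iter_mul (hP : IsKernel P) {γ : ℝ} (hγ0 : 0 ≤ γ) (hγ1 : γ < 1)
    {η0 : S → X → ℝ} (hη0 : IsDist2 η0) (h : S → X → ℝ) (s : S) (x : X) :
    Summable (fun t : ℕ => γ ^ t * ((stepDist P g π)^[t] η0) s x * h s x) := by
  simpa [mul_assoc] using
    (occ_summable (π := π) (g := g) hP hγ0 hγ1 hη0 s x).mul_right (h s x)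

lemma occ_pairing (hP : IsKernel P) {γ : ℝ} (hγ0 : 0 ≤ γ) (hγ1 : γ < 1)
    {η0 : S → X → ℝ} (hη0 : IsDist2 η0) (h : S → X → ℝ) :
    ∑ s, ∑ x, occupancy P g π γ η0 s x * h s x
      = (1 - γ) * ∑' t : ℕ, γ ^ t * ∑ s, ∑ x, ((stepDist P g π)^[t] η0) s x * h s x := by
  have hsx : ∀ (s : S) (x : X),
      Summable (fun t : ℕ => γ ^ t * ((stepDist P g π)^[t] η0) s x * h s x) :=
    fun s x => summable_iter_mul hP hγ0 hγ1 hη0 h s x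
  have e1 : ∀ s x, occupancy P g π γ η0 s x * h s x
      = (1 - γ) * ∑' t : ℕ, γ ^ t * ((stepDist P g π)^[t] η0) s x * h s x := by
    intro s x
    rw [occupancy, mul_assoc, ← tsum_mul_right]
  calc ∑ s, ∑ x, occupancy P g π γ η0 s x * h s x
      = (1 - γ) * ∑ s, ∑ x, ∑' t : ℕ, γ ^ t * ((stepDist P g π)^[t] η0) s x * h s x := by
        rw [Finset.mul_sum]
        refine Finset.sum_congr rfl fun s _ => ?_
        rw [Finset.mul_sum]; exact Finset.sum_congr rfl fun x _ => e1 s x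
    _ = (1 - γ) * ∑ s, ∑' t : ℕ, ∑ x, γ ^ t * ((stepDist P g π)^[t] η0) s x * h s x := by
        congr 1
        exact Finset.sum_congr rfl fun s _ => (Summable.tsum_finsetSum (fun x _ => hsx s x)).symm
    _ = (1 - γ) * ∑' t : ℕ, ∑ s, ∑ x, γ ^ t * ((stepDist P g π)^[t] η0) s x * h s x := by
        congr 1
        exact (Summable.tsum_finsetSum (fun s _ => summable_sum (fun x _ => hsx s x))).symm
    _ = (1 - γ) * ∑' t : ℕ, γ ^ t * ∑ s, ∑ x, ((stepDist P g π)^[t] η0) s x * h s x := by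
        congr 1
        refine tsum_congr fun t => ?_
        rw [Finset.mul_sum]
        refine Finset.sum_congr rfl fun s _ => ?_
        rw [Finset.mul_sum]
        exact Finset.sum_congr rfl fun x _ => by ring

lemma occ_nonneg (hP : IsKernel P) {γ : ℝ} (hγ0 : 0 ≤ γ) (hγ1 : γ < 1)
    {η0 : S → X → ℝ} (hη0 : IsDist2 η0) (s : S) (x : X) :
    0 ≤ occupancy P g π γ η0 s x := by
  refine mul_nonneg (by linarith) (tsum_nonneg fun t => ?_)
  have := iter_nonneg (π := π) (g := g) hP hη0.1 t s x
  positivity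

lemma occ_mass (hP : IsKernel P) {γ : ℝ} (hγ0 : 0 ≤ γ) (hγ1 : γ < 1)
    {η0 : S → X → ℝ} (hη0 : IsDist2 η0) :
    ∑ s, ∑ x, occupancy P g π γ η0 s x = 1 := by
  have := occ_pairing (π := π) (g := g) hP hγ0 hγ1 hη0 (fun _ _ => (1:ℝ))
  simp only [mul_one] at this
  rw [this]
  have hmass : ∀ t : ℕ, ∑ s, ∑ x, ((stepDist P g π)^[t] η0) s x = 1 :=
    iter_mass hP hη0.2
  calc (1 - γ) * ∑' t : ℕ, γ ^ t * ∑ s, ∑ x, ((stepDist P g π)^[t] η0) s x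
      = (1 - γ) * ∑' t : ℕ, γ ^ t := by
        congr 1; exact tsum_congr fun t => by rw [hmass t, mul_one]
    _ = 1 := by
        rw [tsum_geometric_of_lt_one hγ0 hγ1]
        have : (1:ℝ) - γ ≠ 0 := by linarith
        field_simp

end Aux4

/-- performance-difference bound for greedy policies:
`v^{π_f} − v^{π*} ≤ (1/(1−γ)) (‖Q* − f‖_{2,d^{π_f}_{η₀}×π_f} + ‖Q* − f‖_{2,d^{π_f}_{η₀}×π*})`. -/
theorem statement15 {S X A : Type*} [Fintype S] [Fintype X] [Fintype A]
    [Nonempty S] [Nonempty X] [Nonempty A] [DecidableEq X] [DecidableEq A]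
    (P : S → A → S → ℝ) (g : S → X → A → S → X) (R : S → X → A → ℝ) (γ : ℝ)
    (hP : IsKernel P) (hγ0 : 0 ≤ γ) (hγ1 : γ < 1)
    (Q f : S → X → A → ℝ)
    (hQ : ∀ s x a, Q s x a = bellman P g R γ Q s x a)
    (πstar πf : S → X → A)
    (hπstar : ∀ s x a, Q s x (πstar s x) ≤ Q s x a)
    (hπf : ∀ s x a, f s x (πf s x) ≤ f s x a)
    (η0 : S → X → ℝ) (hη0 : IsDist2 η0)
    -- the value functions of the two policies (unique fixed points since γ < 1)
    (Vπf Vπstar : S → X → ℝ)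
    (hVπf : ∀ s x, Vπf s x
      = R s x (πf s x) + γ * ∑ s', P s (πf s x) s' * Vπf s' (g s x (πf s x) s'))
    (hVπstar : ∀ s x, Vπstar s x
      = R s x (πstar s x)
        + γ * ∑ s', P s (πstar s x) s' * Vπstar s' (g s x (πstar s x) s')) :
    (∑ s, ∑ x, η0 s x * Vπf s x) - (∑ s, ∑ x, η0 s x * Vπstar s x)
      ≤ (1 / (1 - γ))
          * (norm2 (prodPolicy (occupancy P g πf γ η0) πf)
                (fun s x a => Q s x a - f s x a)
              + norm2 (prodPolicy (occupancy P g πf γ η0) πstar)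
                  (fun s x a => Q s x a - f s x a)) := by
  classical
  have h1γ : (0:ℝ) < 1 - γ := by linarith
  set Δ : S → X → ℝ := fun s x => Vπf s x - Vmin Q s x with hΔdef
  set ε : S → X → ℝ := fun s x => Q s x (πf s x) - Q s x (πstar s x) with hεdef
  have hVstar_pi : ∀ s x, Vmin Q s x = Q s x (πstar s x) := fun s x =>
    le_antisymm (Finset.inf'_le _ (Finset.mem_univ _))
      (Finset.le_inf' _ _ fun a _ => hπstar s x a)
  have hQfix : ∀ s x a, Q s x a
      = R s x a + γ * ∑ s', P s a s' * Vmin Q s' (g s x a s') := fun s x a => hQ s x a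
  -- Vπstar equals the optimal value Vmin Q
  have hVeq : ∀ s x, Vπstar s x = Vmin Q s x := by
    have hrec : ∀ s x, (fun s x => Vπstar s x - Vmin Q s x) s x
        = γ * ∑ s', P s (πstar s x) s'
            * (fun s x => Vπstar s x - Vmin Q s x) s' (g s x (πstar s x) s') := by
      intro s x
      have h1 := hVπstar s x
      have h2 : Vmin Q s x = R s x (πstar s x)
          + γ * ∑ s', P s (πstar s x) s' * Vmin Q s' (g s x (πstar s x) s') := by
        rw [hVstar_pi s x]; exact hQfix s x (πstar s x)
      have h3 : ∑ s', P s (πstar s x) s'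
            * (Vπstar s' (g s x (πstar s x) s') - Vmin Q s' (g s x (πstar s x) s'))
          = (∑ s', P s (πstar s x) s' * Vπstar s' (g s x (πstar s x) s'))
            - ∑ s', P s (πstar s x) s' * Vmin Q s' (g s x (πstar s x) s') := by
        rw [← Finset.sum_sub_distrib]
        exact Finset.sum_congr rfl fun s' _ => by ring
      simp only
      rw [h3, h1, h2]; ring
    have hz := contraction_zero hP hγ0 hγ1 hrec
    intro s x
    have := hz s x
    linarith
  have hLHS : (∑ s, ∑ x, η0 s x * Vπf s x) - (∑ s, ∑ x, η0 s x * Vπstar s x)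
      = ∑ s, ∑ x, η0 s x * Δ s x := by
    rw [← Finset.sum_sub_distrib]
    refine Finset.sum_congr rfl fun s _ => ?_
    rw [← Finset.sum_sub_distrib]
    refine Finset.sum_congr rfl fun x _ => ?_
    rw [hVeq s x]
    simp only [hΔdef]
    ring
  have hε0 : ∀ s x, 0 ≤ ε s x := fun s x => by
    have := hπstar s x (πf s x)
    simp only [hεdef]
    linarith
  -- the Bellman-residual recursion for Δ
  have hΔrec : ∀ s x, Δ s x
      = ε s x + γ * ∑ s', P s (πf s x) s' * Δ s' (g s x (πf s x) s') := by
    intro s x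
    have h1 := hVπf s x
    have h2 := hQfix s x (πf s x)
    have h3 : ∑ s', P s (πf s x) s' * Δ s' (g s x (πf s x) s')
        = (∑ s', P s (πf s x) s' * Vπf s' (g s x (πf s x) s'))
          - ∑ s', P s (πf s x) s' * Vmin Q s' (g s x (πf s x) s') := by
      rw [← Finset.sum_sub_distrib]
      refine Finset.sum_congr rfl fun s' _ => ?_
      simp only [hΔdef]
      ring
    simp only [hΔdef, hεdef]
    rw [h3, h1, h2, hVstar_pi s x]
    ring
  -- one-step identity for the iterated distributions
  have key : ∀ t : ℕ, ∑ s, ∑ x, ((stepDist P g πf)^[t] η0) s x * Δ s x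
      = (∑ s, ∑ x, ((stepDist P g πf)^[t] η0) s x * ε s x)
        + γ * ∑ s, ∑ x, ((stepDist P g πf)^[t+1] η0) s x * Δ s x := by
    intro t
    have hdual := step_dual P g πf ((stepDist P g πf)^[t] η0) Δ
    rw [Function.iterate_succ_apply', hdual]
    have expand : ∀ s x, ((stepDist P g πf)^[t] η0) s x * Δ s x
        = ((stepDist P g πf)^[t] η0) s x * ε s x
          + γ * (((stepDist P g πf)^[t] η0) s x
              * ∑ s', P s (πf s x) s' * Δ s' (g s x (πf s x) s')) := by
      intro s x
      rw [hΔrec s x]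
      ring
    simp only [expand]
    rw [Finset.mul_sum]
    rw [← Finset.sum_add_distrib]
    refine Finset.sum_congr rfl fun s _ => ?_
    rw [Finset.mul_sum, ← Finset.sum_add_distrib]
  -- telescoping partial sums
  have hpartial : ∀ n : ℕ,
      ∑ t ∈ Finset.range n, γ ^ t * ∑ s, ∑ x, ((stepDist P g πf)^[t] η0) s x * ε s x
      = (∑ s, ∑ x, η0 s x * Δ s x)
        - γ ^ n * ∑ s, ∑ x, ((stepDist P g πf)^[n] η0) s x * Δ s x := by
    intro n
    induction n with
    | zero => simp
    | succ n ih =>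
      rw [Finset.sum_range_succ, ih, key n]
      ring
  -- bounds for the tail and summability
  set Cε : ℝ := ∑ s, ∑ x, ε s x with hCε
  set CΔ : ℝ := ∑ s, ∑ x, |Δ s x| with hCΔ
  have hLε_nonneg : ∀ t : ℕ, 0 ≤ ∑ s, ∑ x, ((stepDist P g πf)^[t] η0) s x * ε s x := by
    intro t
    refine Finset.sum_nonneg fun s _ => Finset.sum_nonneg fun x _ =>
      mul_nonneg (iter_nonneg hP hη0.1 t s x) (hε0 s x)
  have hLε_le : ∀ t : ℕ, (∑ s, ∑ x, ((stepDist P g πf)^[t] η0) s x * ε s x) ≤ Cε := by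
    intro t
    refine Finset.sum_le_sum fun s _ => Finset.sum_le_sum fun x _ => ?_
    calc ((stepDist P g πf)^[t] η0) s x * ε s x ≤ 1 * ε s x :=
          mul_le_mul_of_nonneg_right (iter_le_one hP hη0 t s x) (hε0 s x)
      _ = ε s x := one_mul _
  have hLΔ_bound : ∀ t : ℕ,
      |∑ s, ∑ x, ((stepDist P g πf)^[t] η0) s x * Δ s x| ≤ CΔ := by
    intro t
    calc |∑ s, ∑ x, ((stepDist P g πf)^[t] η0) s x * Δ s x|
        ≤ ∑ s, |∑ x, ((stepDist P g πf)^[t] η0) s x * Δ s x| :=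
          Finset.abs_sum_le_sum_abs _ _
      _ ≤ ∑ s, ∑ x, |((stepDist P g πf)^[t] η0) s x * Δ s x| :=
          Finset.sum_le_sum fun s _ => Finset.abs_sum_le_sum_abs _ _
      _ ≤ CΔ := by
          refine Finset.sum_le_sum fun s _ => Finset.sum_le_sum fun x _ => ?_
          rw [abs_mul, abs_of_nonneg (iter_nonneg hP hη0.1 t s x)]
          calc ((stepDist P g πf)^[t] η0) s x * |Δ s x| ≤ 1 * |Δ s x| :=
                mul_le_mul_of_nonneg_right (iter_le_one hP hη0 t s x) (abs_nonneg _)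
            _ = |Δ s x| := one_mul _
  have hsummable : Summable (fun t : ℕ =>
      γ ^ t * ∑ s, ∑ x, ((stepDist P g πf)^[t] η0) s x * ε s x) := by
    refine Summable.of_nonneg_of_le
      (fun t => mul_nonneg (pow_nonneg hγ0 t) (hLε_nonneg t))
      (fun t => mul_le_mul_of_nonneg_left (hLε_le t) (pow_nonneg hγ0 t))
      ((summable_geometric_of_lt_one hγ0 hγ1).mul_right Cε)
  have htail : Filter.Tendsto
      (fun n : ℕ => γ ^ n * ∑ s, ∑ x, ((stepDist P g πf)^[n] η0) s x * Δ s x)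
      Filter.atTop (nhds 0) := by
    refine squeeze_zero_norm (a := fun n => CΔ * γ ^ n) (fun n => ?_) ?_
    · show ‖γ ^ n * ∑ s, ∑ x, ((stepDist P g πf)^[n] η0) s x * Δ s x‖ ≤ CΔ * γ ^ n
      rw [Real.norm_eq_abs, abs_mul, abs_pow, abs_of_nonneg hγ0, mul_comm]
      exact mul_le_mul_of_nonneg_right (hLΔ_bound n) (pow_nonneg hγ0 n)
    · simpa using (tendsto_pow_atTop_nhds_zero_of_lt_one hγ0 hγ1).const_mul CΔ
  have hhs : HasSum (fun t : ℕ =>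
      γ ^ t * ∑ s, ∑ x, ((stepDist P g πf)^[t] η0) s x * ε s x)
      (∑ s, ∑ x, η0 s x * Δ s x) := by
    rw [Summable.hasSum_iff_tendsto_nat hsummable]
    have heq : (fun n : ℕ => ∑ t ∈ Finset.range n,
        γ ^ t * ∑ s, ∑ x, ((stepDist P g πf)^[t] η0) s x * ε s x)
        = fun n : ℕ => (∑ s, ∑ x, η0 s x * Δ s x)
            - γ ^ n * ∑ s, ∑ x, ((stepDist P g πf)^[n] η0) s x * Δ s x :=
      funext hpartial
    rw [heq]
    simpa using tendsto_const_nhds.sub htail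
  have hocc_eps : ∑ s, ∑ x, occupancy P g πf γ η0 s x * ε s x
      = (1 - γ) * ∑ s, ∑ x, η0 s x * Δ s x := by
    rw [occ_pairing hP hγ0 hγ1 hη0 ε, hhs.tsum_eq]
  -- occupancy is a distribution
  have hoccnn : ∀ s x, 0 ≤ occupancy P g πf γ η0 s x := occ_nonneg hP hγ0 hγ1 hη0
  have hoccmass : ∑ s, ∑ x, occupancy P g πf γ η0 s x = 1 := occ_mass hP hγ0 hγ1 hη0
  -- Cauchy–Schwarz on the occupancy measure
  have hl1 : ∀ w : S → X → ℝ,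
      (∑ s, ∑ x, occupancy P g πf γ η0 s x * |w s x|)
        ≤ Real.sqrt (∑ s, ∑ x, occupancy P g πf γ η0 s x * (w s x) ^ 2) := by
    intro w
    have := l1_le_l2 (fun p : S × X => occupancy P g πf γ η0 p.1 p.2)
      (fun p : S × X => |w p.1 p.2|) (fun p => hoccnn p.1 p.2)
      (by rw [Fintype.sum_prod_type]; exact hoccmass)
    rw [Fintype.sum_prod_type] at this
    have e2 : ∑ p : S × X, occupancy P g πf γ η0 p.1 p.2 * |w p.1 p.2| ^ 2
        = ∑ s, ∑ x, occupancy P g πf γ η0 s x * (w s x) ^ 2 := by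
      rw [Fintype.sum_prod_type]
      exact Finset.sum_congr rfl fun s _ => Finset.sum_congr rfl fun x _ => by
        rw [sq_abs]
    rw [e2] at this
    exact this
  -- rewrite the norms
  have hN : ∀ π' : S → X → A,
      norm2 (prodPolicy (occupancy P g πf γ η0) π') (fun s x a => Q s x a - f s x a)
        = Real.sqrt (∑ s, ∑ x, occupancy P g πf γ η0 s x
            * (Q s x (π' s x) - f s x (π' s x)) ^ 2) := by
    intro π'
    unfold norm2 prodPolicy
    congr 1
    refine Finset.sum_congr rfl fun s _ => Finset.sum_congr rfl fun x _ => ?_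
    simp [mul_ite, ite_mul, mul_one, mul_zero, zero_mul, Finset.sum_ite_eq']
  -- pointwise bound on ε
  have hεle : ∀ s x, ε s x ≤ |Q s x (πf s x) - f s x (πf s x)|
      + |Q s x (πstar s x) - f s x (πstar s x)| := by
    intro s x
    have h4 := hπf s x (πstar s x)
    have h5 := le_abs_self (Q s x (πf s x) - f s x (πf s x))
    have h6 := neg_abs_le (Q s x (πstar s x) - f s x (πstar s x))
    simp only [hεdef]
    linarith
  -- put everything together
  rw [hLHS]
  have hrewrite : ∑ s, ∑ x, η0 s x * Δ s x
      = (1 / (1 - γ)) * ∑ s, ∑ x, occupancy P g πf γ η0 s x * ε s x := by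
    rw [hocc_eps]
    field_simp
  rw [hrewrite]
  refine mul_le_mul_of_nonneg_left ?_ (by positivity)
  calc ∑ s, ∑ x, occupancy P g πf γ η0 s x * ε s x
      ≤ ∑ s, ∑ x, occupancy P g πf γ η0 s x
          * (|Q s x (πf s x) - f s x (πf s x)|
            + |Q s x (πstar s x) - f s x (πstar s x)|) := by
        refine Finset.sum_le_sum fun s _ => Finset.sum_le_sum fun x _ =>
          mul_le_mul_of_nonneg_left (hεle s x) (hoccnn s x)
    _ = (∑ s, ∑ x, occupancy P g πf γ η0 s x * |Q s x (πf s x) - f s x (πf s x)|)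
        + ∑ s, ∑ x, occupancy P g πf γ η0 s x
            * |Q s x (πstar s x) - f s x (πstar s x)| := by
        simp only [mul_add, Finset.sum_add_distrib]
    _ ≤ Real.sqrt (∑ s, ∑ x, occupancy P g πf γ η0 s x
            * (Q s x (πf s x) - f s x (πf s x)) ^ 2)
        + Real.sqrt (∑ s, ∑ x, occupancy P g πf γ η0 s x
            * (Q s x (πstar s x) - f s x (πstar s x)) ^ 2) :=
        add_le_add (hl1 fun s x => Q s x (πf s x) - f s x (πf s x))
          (hl1 fun s x => Q s x (πstar s x) - f s x (πstar s x))
    _ = _ := by rw [hN πf, hN πstar]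
end
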